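/- arXiv:2205.15993 — 6 statements merged into one kernel-verified Lean document; each statement's English description precedes it below -/
import Mathlib

section
/- Let Σ=(X,U,φ) be a forward complete system with inputs endowed with an admissible functional ‖·‖_U satisfying condition (E), and let Assumption A1 hold. Then the following are equivalent: (a) Σ is 0-GUAS and UBEBS (i.e. UGB with respect to ‖·‖_U); (b) Σ is iISS (i.e. ISS with respect to ‖·‖_U). -/
/-!
Necessity is immediate: zero inputs give 0-GUAS, and `β r t ≤ β r 0` gives UBEBS.

For sufficiency, Assumption 1 lets trajectories driven by small inputs shadow the zero-input ones
on windows of fixed length, so iterating windows yields uniform local stability. Condition (E)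
splits the input's size among consecutive windows, so of the first `⌈r / δ⌉ + 1` windows one
carries an input of size at most `δ`; at its end the state is small, and from then on it stays
below `γ ‖u‖`, where `γ s` is the largest norm reachable from states and inputs of size `s`.
Hence the excess `‖x t‖ - γ ‖u‖` is uniformly bounded, small for small initial states and
uniformly decaying: it is dominated by a `KL` function, while `γ` is dominated by a `K∞`
function. Averaging over `[r, 2 r]` supplies the continuity the supremum constructions lack.
-/

open Set Filter

/-- A (forward complete) time-varying system with inputs `Σ = (X, U, φ)`:
`U` is a set of admissible inputs containing the zero input and closed under
concatenation, and `φ` is a transition map satisfying the identity, causality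
and semigroup axioms. -/
structure Sys (X Uv : Type*) [NormedAddCommGroup X] [NormedSpace ℝ X]
    [AddCommGroup Uv] [Module ℝ Uv] where
  U : Set (ℝ → Uv)
  zero_mem : (fun _ => (0 : Uv)) ∈ U
  concat_mem : ∀ u ∈ U, ∀ v ∈ U, ∀ t : ℝ, 0 < t →
      (fun r => if r ≤ t then u r else v r) ∈ U
  phi : ℝ → ℝ → X → (ℝ → Uv) → X
  identity : ∀ t : ℝ, 0 ≤ t → ∀ x u, u ∈ U → phi t t x u = x
  causality : ∀ s t : ℝ, ∀ x : X, ∀ u v, 0 ≤ s → s < t → u ∈ U → v ∈ U →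
      (∀ r, s < r → r ≤ t → v r = u r) → phi t s x v = phi t s x u
  semigroup : ∀ s τ t : ℝ, ∀ x : X, ∀ u, 0 ≤ s → s < τ → τ < t → u ∈ U →
      phi t τ (phi τ s x u) u = phi t s x u

variable {X Uv : Type*} [NormedAddCommGroup X] [NormedSpace ℝ X]
  [AddCommGroup Uv] [Module ℝ Uv]

/-- The truncation `u_(s,t]` of an input. -/
noncomputable def trunc (u : ℝ → Uv) (s t : ℝ) : ℝ → Uv := fun r => if s < r ∧ r ≤ t then u r else 0

/-- The truncation `u_(s,∞)` of an input. -/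
noncomputable def truncFrom (u : ℝ → Uv) (s : ℝ) : ℝ → Uv := fun r => if s < r then u r else 0

/-- An admissible functional `‖·‖_U : U → [0,∞]`. -/
structure IsAdmissible (S : Sys X Uv) (nrm : (ℝ → Uv) → ENNReal) : Prop where
  zero : nrm (fun _ => (0 : Uv)) = 0
  fin : ∀ u ∈ S.U, ∀ s t : ℝ, 0 ≤ s → s < t → nrm (trunc u s t) < ⊤
  le_tail : ∀ u ∈ S.U, ∀ s t : ℝ, 0 ≤ s → s < t → nrm (trunc u s t) ≤ nrm (truncFrom u s)
  tail_le : ∀ u ∈ S.U, ∀ s : ℝ, 0 ≤ s → nrm (truncFrom u s) ≤ nrm u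

/-- A function of class `K`. -/
def ClassK (α : ℝ → ℝ) : Prop :=
  ContinuousOn α (Ici 0) ∧ StrictMonoOn α (Ici 0) ∧ α 0 = 0

/-- A function of class `K∞`. -/
def ClassKInf (α : ℝ → ℝ) : Prop := ClassK α ∧ Tendsto α atTop atTop


/-- A function of class `KL`. -/
def ClassKL (β : ℝ → ℝ → ℝ) : Prop :=
  (∀ t ≥ (0:ℝ), ClassK (fun r => β r t)) ∧
  (∀ r ≥ (0:ℝ), AntitoneOn (fun t => β r t) (Ici 0) ∧
    Tendsto (fun t => β r t) atTop (nhds 0))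

/-- Assumption 1: continuity of trajectories with respect to the input at the zero input,
uniformly over the initial time. -/
def AssumptionA1 (S : Sys X Uv) (nrm : (ℝ → Uv) → ENNReal) : Prop :=
  ∀ r > (0:ℝ), ∀ ε > (0:ℝ), ∀ T > (0:ℝ), ∃ δ > (0:ℝ),
    ∀ t0 ≥ (0:ℝ), ∀ x0 : X, ∀ u ∈ S.U, nrm u ≤ ENNReal.ofReal δ →
      ∀ tstar ∈ Icc t0 (t0 + T),
        (∀ t ∈ Icc t0 tstar,
            ‖S.phi t t0 x0 u‖ ≤ r ∧ ‖S.phi t t0 x0 (fun _ => 0)‖ ≤ r) →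
        ∀ t ∈ Icc t0 tstar,
          ‖S.phi t t0 x0 (fun _ => 0) - S.phi t t0 x0 u‖ ≤ ε

/-- The system is 0-GUAS: globally uniformly asymptotically stable under zero input. -/
def ZeroGUAS (S : Sys X Uv) : Prop :=
  ∃ β, ClassKL β ∧ ∀ t0 ≥ (0:ℝ), ∀ x0 : X, ∀ t ≥ t0,
    ‖S.phi t t0 x0 (fun _ => 0)‖ ≤ β ‖x0‖ (t - t0)

/-- The system is ISS with respect to the admissible functional `nrm`.
Inputs with infinite `nrm` satisfy the estimate trivially thanks to the
convention `ρ(∞) = ∞`, so only inputs of finite `nrm` are quantified over. -/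
def ISS (S : Sys X Uv) (nrm : (ℝ → Uv) → ENNReal) : Prop :=
  ∃ β ρ, ClassKL β ∧ ClassKInf ρ ∧
    ∀ t0 ≥ (0:ℝ), ∀ x0 : X, ∀ u ∈ S.U, nrm u < ⊤ → ∀ t ≥ t0,
      ‖S.phi t t0 x0 u‖ ≤ β ‖x0‖ (t - t0) + ρ (nrm u).toReal

/-- The system is UGB (uniformly globally bounded) with respect to `nrm`. -/
def UGB (S : Sys X Uv) (nrm : (ℝ → Uv) → ENNReal) : Prop :=
  ∃ c α ρ, 0 ≤ c ∧ ClassKInf α ∧ ClassKInf ρ ∧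
    ∀ t0 ≥ (0:ℝ), ∀ x0 : X, ∀ u ∈ S.U, nrm u < ⊤ → ∀ t ≥ t0,
      ‖S.phi t t0 x0 u‖ ≤ c + α ‖x0‖ + ρ (nrm u).toReal

/-- The system is UGS (uniformly globally stable) with respect to `nrm`, i.e. UGB with `c = 0`. -/
def UGS (S : Sys X Uv) (nrm : (ℝ → Uv) → ENNReal) : Prop :=
  ∃ α ρ, ClassKInf α ∧ ClassKInf ρ ∧
    ∀ t0 ≥ (0:ℝ), ∀ x0 : X, ∀ u ∈ S.U, nrm u < ⊤ → ∀ t ≥ t0,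
      ‖S.phi t t0 x0 u‖ ≤ α ‖x0‖ + ρ (nrm u).toReal

/-- Condition (E) on the admissible functional. -/
def CondE (S : Sys X Uv) (nrm : (ℝ → Uv) → ENNReal) : Prop :=
  ∀ u ∈ S.U, ∀ t1 t2 t3 : ℝ, 0 ≤ t1 → t1 < t2 → t2 < t3 →
    nrm (trunc u t1 t2) + nrm (trunc u t2 t3) ≤ nrm (trunc u t1 t3)

open Topology MeasureTheory

namespace ClassK

variable {α : ℝ → ℝ}

lemma monotoneOn (h : ClassK α) : MonotoneOn α (Ici 0) := h.2.1.monotoneOn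

end ClassK

namespace ClassKL

variable {β : ℝ → ℝ → ℝ}

lemma mono_left (h : ClassKL β) {a b t : ℝ} (ha : 0 ≤ a) (hab : a ≤ b) (ht : 0 ≤ t) :
    β a t ≤ β b t :=
  (h.1 t ht).monotoneOn ha (ha.trans hab) hab

lemma anti_right (h : ClassKL β) {r s t : ℝ} (hr : 0 ≤ r) (hs : 0 ≤ s) (hst : s ≤ t) :
    β r t ≤ β r s :=
  (h.2 r hr).1 hs (hs.trans hst) hst

lemma exists_pos_time_le (h : ClassKL β) {r ε : ℝ} (hr : 0 ≤ r) (hε : 0 < ε) :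
    ∃ T > 0, β r T ≤ ε :=
  (((h.2 r hr).2.eventually (ge_mem_nhds hε)).and (eventually_gt_atTop 0)).exists.imp
    fun _ h => ⟨h.2, h.1⟩

lemma exists_pos_le_at_zero (h : ClassKL β) {ε : ℝ} (hε : 0 < ε) : ∃ δ > 0, β δ 0 ≤ ε := by
  have hcont : Tendsto (β · 0) (𝓝[>] 0) (𝓝 0) := by
    have := continuousWithinAt_Ioi_iff_Ici.2 ((h.1 0 le_rfl).1 0 self_mem_Ici)
    simpa [ContinuousWithinAt, (h.1 0 le_rfl).2.2] using this
  exact ((hcont.eventually (ge_mem_nhds hε)).and self_mem_nhdsWithin).exists.imp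
    fun _ h => ⟨h.2, h.1⟩

end ClassKL

lemma classK_add_mul {m : ℝ → ℝ} {k : ℝ} (hc : ContinuousOn m (Ici 0))
    (hm : MonotoneOn m (Ici 0)) (h0 : m 0 = 0) (hk : 0 < k) : ClassK (fun r => m r + k * r) :=
  ⟨hc.add (continuousOn_const.mul continuousOn_id),
    fun _ ha _ hb hab => add_lt_add_of_le_of_lt (hm ha hb hab.le) (mul_lt_mul_of_pos_left hab hk),
    by simp [h0]⟩

lemma classKInf_add_id {m : ℝ → ℝ} (hc : ContinuousOn m (Ici 0)) (hm : MonotoneOn m (Ici 0))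
    (h0 : m 0 = 0) : ClassKInf (fun r => m r + r) :=
  ⟨by simpa using classK_add_mul hc hm h0 one_pos,
    tendsto_id.zero_eventuallyLE_add_atTop <|
      (eventually_ge_atTop 0).mono fun r hr => show 0 ≤ m r from h0 ▸ hm self_mem_Ici hr hr⟩

lemma Monotone.tendsto_nhdsGT_zero {g : ℝ → ℝ} (hg : Monotone g) (hnonneg : ∀ r, 0 ≤ g r)
    (hsmall : ∀ ε > 0, ∃ δ > 0, g δ ≤ ε) : Tendsto g (𝓝[>] 0) (𝓝 0) :=
  tendsto_order.2 ⟨fun _ ha => Eventually.of_forall fun r => ha.trans_le (hnonneg r),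
    fun a ha => by
      obtain ⟨δ, hδ, hgδ⟩ := hsmall (a / 2) (half_pos ha)
      filter_upwards [Ioo_mem_nhdsGT hδ] with r hr
      linarith [hg hr.2.le]⟩

lemma Antitone.tendsto_atTop_zero {g : ℝ → ℝ} (hg : Antitone g) (hnonneg : ∀ t, 0 ≤ g t)
    (hsmall : ∀ ε > 0, ∃ T, g T ≤ ε) : Tendsto g atTop (𝓝 0) :=
  tendsto_order.2 ⟨fun _ ha => Eventually.of_forall fun t => ha.trans_le (hnonneg t),
    fun a ha => by
      obtain ⟨T, hgT⟩ := hsmall (a / 2) (half_pos ha)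
      filter_upwards [eventually_ge_atTop T] with t ht
      linarith [hg ht]⟩

lemma Monotone.nonneg_of_tendsto_nhdsGT_zero {g : ℝ → ℝ} (hg : Monotone g)
    (hg0 : Tendsto g (𝓝[>] 0) (𝓝 0)) {r : ℝ} (hr : 0 < r) : 0 ≤ g r :=
  _root_.le_of_tendsto hg0 (mem_of_superset (Ioo_mem_nhdsGT hr) fun _ hv => hg hv.2.le)

noncomputable def dyadicMean (g : ℝ → ℝ) (r : ℝ) : ℝ := (∫ v in r..2 * r, g v) / r

section dyadicMean

variable {g g₁ g₂ : ℝ → ℝ} {r : ℝ}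

@[simp] lemma dyadicMean_zero : dyadicMean g 0 = 0 := by simp [dyadicMean]

lemma dyadicMean_eq_integral_comp_mul (hr : 0 < r) :
    dyadicMean g r = ∫ w in (1 : ℝ)..2, g (r * w) := by
  rw [intervalIntegral.integral_comp_mul_left g hr.ne', dyadicMean, mul_one, smul_eq_mul,
    div_eq_inv_mul, mul_comm r 2]

lemma le_dyadicMean_of_pos (hg : Monotone g) (hr : 0 < r) : g r ≤ dyadicMean g r := by
  rw [dyadicMean, le_div_iff₀ hr]
  calc g r * r = ∫ _ in r..2 * r, g r := by simp; ring
    _ ≤ ∫ v in r..2 * r, g v :=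
      intervalIntegral.integral_mono_on (by linarith) intervalIntegrable_const
        hg.intervalIntegrable fun v hv => hg hv.1

lemma dyadicMean_le (hg : Monotone g) (hr : 0 < r) : dyadicMean g r ≤ g (2 * r) := by
  rw [dyadicMean, div_le_iff₀ hr]
  calc ∫ v in r..2 * r, g v ≤ ∫ _ in r..2 * r, g (2 * r) :=
      intervalIntegral.integral_mono_on (by linarith) hg.intervalIntegrable
        intervalIntegrable_const fun v hv => hg hv.2
    _ = g (2 * r) * r := by simp; ring

lemma dyadicMean_le_dyadicMean (hg₁ : Monotone g₁) (hg₂ : Monotone g₂) (h : g₁ ≤ g₂)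
    (hr : 0 ≤ r) : dyadicMean g₁ r ≤ dyadicMean g₂ r :=
  div_le_div_of_nonneg_right (intervalIntegral.integral_mono_on (by linarith)
    hg₁.intervalIntegrable hg₂.intervalIntegrable fun v _ => h v) hr

variable (hg : Monotone g) (hg0 : Tendsto g (𝓝[>] 0) (𝓝 0))
include hg hg0

lemma le_dyadicMean (hr : 0 ≤ r) : g r ≤ dyadicMean g r := by
  rcases hr.eq_or_lt with rfl | hr
  · simpa using ge_of_tendsto hg0 (eventually_nhdsWithin_of_forall fun v hv => hg (le_of_lt hv))
  · exact le_dyadicMean_of_pos hg hr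

lemma monotoneOn_dyadicMean : MonotoneOn (dyadicMean g) (Ici 0) := by
  intro a ha b hb hab
  rcases (show (0 : ℝ) ≤ a from ha).eq_or_lt with rfl | ha
  · rcases (show (0 : ℝ) ≤ b from hb).eq_or_lt with rfl | hb
    · rfl
    · rw [dyadicMean_zero]
      exact (hg.nonneg_of_tendsto_nhdsGT_zero hg0 hb).trans (le_dyadicMean_of_pos hg hb)
  rw [dyadicMean_eq_integral_comp_mul ha, dyadicMean_eq_integral_comp_mul (ha.trans_le hab)]
  exact intervalIntegral.integral_mono_on one_le_two
    (hg.comp (monotone_mul_left_of_nonneg ha.le)).intervalIntegrable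
    (hg.comp (monotone_mul_left_of_nonneg (ha.le.trans hab))).intervalIntegrable
    fun w hw => hg (mul_le_mul_of_nonneg_right hab (by linarith [hw.1]))

lemma continuousOn_dyadicMean : ContinuousOn (dyadicMean g) (Ici 0) := by
  intro x hx
  rcases (show (0 : ℝ) ≤ x from hx).eq_or_lt with rfl | hx
  · have hdouble : Tendsto (fun y : ℝ => 2 * y) (𝓝[>] 0) (𝓝[>] 0) := by
      have := (continuous_const_mul (2 : ℝ)).continuousWithinAt.tendsto_nhdsWithin
        (fun y (hy : 0 < y) => show (0 : ℝ) < 2 * y by positivity) (x := 0)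
      rwa [mul_zero] at this
    rw [← continuousWithinAt_Ioi_iff_Ici, ContinuousWithinAt, dyadicMean_zero]
    exact tendsto_of_tendsto_of_tendsto_of_le_of_le' hg0 (hg0.comp hdouble)
      (eventually_nhdsWithin_of_forall fun _ hy => le_dyadicMean_of_pos hg hy)
      (eventually_nhdsWithin_of_forall fun _ hy => dyadicMean_le hg hy)
  · -- away from `0`, the mean is a difference quotient of a primitive of `g`
    have hF : dyadicMean g =
        fun y => ((∫ v in (0 : ℝ)..2 * y, g v) - ∫ v in (0 : ℝ)..y, g v) / y := by
      funext y
      rw [dyadicMean, intervalIntegral.integral_interval_sub_left hg.intervalIntegrable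
        hg.intervalIntegrable]
    have hprim := intervalIntegral.continuous_primitive
      (fun _ _ => hg.intervalIntegrable (μ := volume)) 0
    rw [hF]
    exact (((hprim.comp (continuous_const.mul continuous_id)).sub hprim).continuousAt.div
      continuousAt_id hx.ne').continuousWithinAt

end dyadicMean

theorem exists_classKInf_ge {g : ℝ → ℝ} (hg : Monotone g) (hg0 : Tendsto g (𝓝[>] 0) (𝓝 0)) :
    ∃ ρ, ClassKInf ρ ∧ ∀ s, 0 ≤ s → g s ≤ ρ s :=
  ⟨fun s => dyadicMean g s + s,
    classKInf_add_id (continuousOn_dyadicMean hg hg0) (monotoneOn_dyadicMean hg hg0)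
      dyadicMean_zero,
    fun _ hs => (le_dyadicMean hg hg0 hs).trans (le_add_of_nonneg_right hs)⟩

-- `dyadicMean` makes `G` continuous in `r`; the term `(1 + t)⁻¹ * r` makes it strictly increasing.
theorem exists_classKL_ge {G : ℝ → ℝ → ℝ} (hmono : ∀ t, Monotone (G · t))
    (hanti : ∀ r, Antitone (G r ·)) (hnonneg : ∀ r t, 0 ≤ G r t)
    (hsmall : ∀ ε > 0, ∃ δ > 0, ∀ t, G δ t ≤ ε) (hdecay : ∀ r, ∀ ε > 0, ∃ T, G r T ≤ ε) :
    ∃ β, ClassKL β ∧ ∀ r t, 0 ≤ r → 0 ≤ t → G r t ≤ β r t := by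
  have hG0 : ∀ t, Tendsto (G · t) (𝓝[>] 0) (𝓝 0) := fun t =>
    (hmono t).tendsto_nhdsGT_zero (hnonneg · t) fun ε hε =>
      let ⟨δ, hδ, h⟩ := hsmall ε hε; ⟨δ, hδ, h t⟩
  have hdecay' : ∀ r, Tendsto (G r ·) atTop (𝓝 0) := fun r =>
    (hanti r).tendsto_atTop_zero (hnonneg r) (hdecay r)
  refine ⟨fun r t => dyadicMean (G · t) r + (1 + t)⁻¹ * r, ⟨fun t ht => ?_, fun r hr => ⟨?_, ?_⟩⟩,
    fun r t hr ht => (le_dyadicMean (hmono t) (hG0 t) hr).trans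
      (le_add_of_nonneg_right (by positivity))⟩
  · exact classK_add_mul (continuousOn_dyadicMean (hmono t) (hG0 t))
      (monotoneOn_dyadicMean (hmono t) (hG0 t)) dyadicMean_zero (by positivity)
  · intro s hs t ht hst
    have hs : (0 : ℝ) ≤ s := hs
    exact add_le_add (dyadicMean_le_dyadicMean (hmono t) (hmono s) (fun r => hanti r hst) hr)
      (mul_le_mul_of_nonneg_right (inv_anti₀ (by positivity) (by linarith)) hr)
  · have hlin : Tendsto (fun t => (1 + t)⁻¹ * r) atTop (𝓝 0) := by
      simpa using (tendsto_inv_atTop_zero.comp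
        (tendsto_atTop_add_const_left atTop 1 tendsto_id)).mul_const r
    rcases hr.eq_or_lt with rfl | hr
    · simp
    have hmean : Tendsto (fun t => dyadicMean (G · t) r) atTop (𝓝 0) :=
      tendsto_of_tendsto_of_tendsto_of_le_of_le tendsto_const_nhds (hdecay' (2 * r))
        (fun t => (hnonneg r t).trans (le_dyadicMean_of_pos (hmono t) hr))
        (fun t => dyadicMean_le (hmono t) hr)
    simpa using hmean.add hlin

-- Read `E r t z` as: a trajectory from a state of norm `r` exceeds its input gain by `z`
-- after time `t`.
theorem exists_classKL_of_bound (E : ℝ → ℝ → ℝ → Prop)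
    (hbdd : ∀ R, ∃ M, ∀ r t z, E r t z → r ≤ R → z ≤ M)
    (hsmall : ∀ ε > 0, ∃ δ > 0, ∀ r t z, E r t z → r ≤ δ → z ≤ ε)
    (hdecay : ∀ R, ∀ ε > 0, ∃ T, ∀ r t z, E r t z → r ≤ R → T ≤ t → z ≤ ε) :
    ∃ β, ClassKL β ∧ ∀ r t z, E r t z → 0 ≤ r → 0 ≤ t → z ≤ β r t := by
  let A : ℝ → ℝ → Set ℝ := fun R T => insert 0 {z | ∃ r t, r ≤ R ∧ T ≤ t ∧ E r t z}
  have hA : ∀ R T, BddAbove (A R T) := fun R T => by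
    obtain ⟨M, hM⟩ := hbdd R
    refine ⟨max M 0, ?_⟩
    rintro _ (rfl | ⟨r, t, hr, -, hE⟩)
    · exact le_max_right _ _
    · exact (hM r t _ hE hr).trans (le_max_left _ _)
  have hle : ∀ R T ε, 0 ≤ ε → (∀ r t z, E r t z → r ≤ R → T ≤ t → z ≤ ε) →
      sSup (A R T) ≤ ε := fun R T ε hε h =>
    csSup_le (insert_nonempty _ _) <| by
      rintro _ (rfl | ⟨r, t, hr, ht, hE⟩)
      exacts [hε, h r t _ hE hr ht]
  obtain ⟨β, hβ, hGβ⟩ := exists_classKL_ge (G := fun R T => sSup (A R T))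
    (fun T R R' h => csSup_le_csSup (hA R' T) (insert_nonempty _ _)
      (insert_subset_insert fun _ ⟨r, t, hr, ht, hE⟩ => ⟨r, t, hr.trans h, ht, hE⟩))
    (fun R T T' h => csSup_le_csSup (hA R T) (insert_nonempty _ _)
      (insert_subset_insert fun _ ⟨r, t, hr, ht, hE⟩ => ⟨r, t, hr, h.trans ht, hE⟩))
    (fun R T => le_csSup (hA R T) (mem_insert _ _))
    (fun ε hε => let ⟨δ, hδ, h⟩ := hsmall ε hε
      ⟨δ, hδ, fun T => hle δ T ε hε.le fun r t z hE hr _ => h r t z hE hr⟩)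
    (fun R ε hε => let ⟨T, h⟩ := hdecay R ε hε; ⟨T, hle R T ε hε.le h⟩)
  exact ⟨β, hβ, fun r t z hE hr ht =>
    (le_csSup (hA r t) (mem_insert_of_mem _ ⟨r, t, le_rfl, le_rfl, hE⟩)).trans (hGβ r t hr ht)⟩

namespace Sys

variable {S : Sys X Uv} {u : ℝ → Uv}

lemma phi_phi (hu : u ∈ S.U) {t0 τ t : ℝ} (h0 : 0 ≤ t0) (h1 : t0 ≤ τ) (h2 : τ ≤ t) (x0 : X) :
    S.phi t τ (S.phi τ t0 x0 u) u = S.phi t t0 x0 u := by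
  rcases h1.eq_or_lt with rfl | h1
  · rw [S.identity t0 h0 x0 u hu]
  rcases h2.eq_or_lt with rfl | h2
  · exact S.identity τ (h0.trans h1.le) _ u hu
  · exact S.semigroup t0 τ t x0 u h0 h1 h2 hu

lemma trunc_mem (hu : u ∈ S.U) {a b : ℝ} (ha : 0 < a) (hab : a < b) : trunc u a b ∈ S.U := by
  convert S.concat_mem _ S.zero_mem _ (S.concat_mem u hu _ S.zero_mem b (ha.trans hab)) a ha
    using 1
  funext r
  simp only [trunc]
  split_ifs <;> grind

lemma phi_trunc (hu : u ∈ S.U) {a b : ℝ} (ha : 0 < a) (hab : a < b) (x : X) :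
    S.phi b a x (trunc u a b) = S.phi b a x u :=
  S.causality a b x u _ ha.le hab hu (trunc_mem hu ha hab) fun _ h1 h2 => if_pos ⟨h1, h2⟩

end Sys

section ConditionE

variable {S : Sys X Uv} {nrm : (ℝ → Uv) → ENNReal} {u : ℝ → Uv} {t : ℕ → ℝ}

lemma CondE.sum_nrm_trunc_le (hE : CondE S nrm) (hu : u ∈ S.U) (ht : StrictMono t) (h0 : 0 ≤ t 0)
    (n : ℕ) :
    ∑ k ∈ Finset.range (n + 1), nrm (trunc u (t k) (t (k + 1))) ≤
      nrm (trunc u (t 0) (t (n + 1))) := by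
  induction n with
  | zero => simp
  | succ n ih =>
    rw [Finset.sum_range_succ]
    exact (add_le_add_left ih _).trans
      (hE u hu _ _ _ h0 (ht n.succ_pos) (ht (Nat.lt_succ_self _)))

lemma CondE.exists_nrm_trunc_lt (hadm : IsAdmissible S nrm) (hE : CondE S nrm) (hu : u ∈ S.U)
    (ht : StrictMono t) (h0 : 0 ≤ t 0) {n : ℕ} {δ : ENNReal} (hn : nrm u < (n + 1) * δ) :
    ∃ k ≤ n, nrm (trunc u (t k) (t (k + 1))) < δ := by
  by_contra! hbig
  have hsum : (n + 1) * δ ≤ ∑ k ∈ Finset.range (n + 1), nrm (trunc u (t k) (t (k + 1))) := by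
    simpa using Finset.card_nsmul_le_sum _ _ δ fun k hk =>
      hbig k (Nat.lt_succ_iff.mp (Finset.mem_range.mp hk))
  refine hn.not_ge (hsum.trans ((hE.sum_nrm_trunc_le hu ht h0 n).trans ?_))
  exact (hadm.le_tail u hu _ _ h0 (ht n.succ_pos)).trans (hadm.tail_le u hu _ h0)

lemma CondE.exists_quiet_window (hadm : IsAdmissible S nrm) (hE : CondE S nrm) (hu : u ∈ S.U)
    (hfin : nrm u < ⊤) {t0 T δ : ℝ} (ht0 : 0 ≤ t0) (hT : 0 < T) (hδ : 0 < δ) {N : ℕ}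
    (hN : (nrm u).toReal < N * δ) :
    ∃ k ≤ N, nrm (trunc u (t0 + (k + 1) * T) (t0 + (k + 1) * T + T)) ≤ ENNReal.ofReal δ := by
  have hquiet : nrm u < (N + 1) * ENNReal.ofReal δ := by
    rw [← ENNReal.ofReal_toReal hfin.ne, ← ENNReal.ofReal_natCast, ← ENNReal.ofReal_one,
      ← ENNReal.ofReal_add (by positivity) zero_le_one, ← ENNReal.ofReal_mul (by positivity),
      ENNReal.ofReal_lt_ofReal_iff (by positivity)]
    linarith
  obtain ⟨k, hkN, hk⟩ := hE.exists_nrm_trunc_lt (t := fun k : ℕ => t0 + (k + 1) * T) hadm hu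
    (fun i j hij => by simp only; gcongr) (by positivity) hquiet
  refine ⟨k, hkN, ?_⟩
  rw [show t0 + (k + 1) * T + T = t0 + (((k + 1 : ℕ) : ℝ) + 1) * T by push_cast; ring]
  exact hk.le

end ConditionE

section WorstNorm

variable {S : Sys X Uv} {nrm : (ℝ → Uv) → ENNReal} {u : ℝ → Uv} {t0 t v : ℝ} {x0 : X}

def reachNorms (S : Sys X Uv) (nrm : (ℝ → Uv) → ENNReal) (v : ℝ) : Set ℝ :=
  {z | ∃ t0 t x0 u, 0 ≤ t0 ∧ t0 ≤ t ∧ ‖x0‖ ≤ v ∧ u ∈ S.U ∧ nrm u ≤ ENNReal.ofReal v ∧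
    ‖S.phi t t0 x0 u‖ = z}

noncomputable def worstNorm (S : Sys X Uv) (nrm : (ℝ → Uv) → ENNReal) (v : ℝ) : ℝ :=
  sSup (insert 0 (reachNorms S nrm v))

lemma UGB.bddAbove_reachNorms (h : UGB S nrm) (v : ℝ) : BddAbove (reachNorms S nrm v) := by
  obtain ⟨c, α, ρ, -, hα, hρ, hU⟩ := h
  refine ⟨c + α v + ρ v, ?_⟩
  rintro _ ⟨t0, t, x0, u, ht0, ht, hx0, hu, hnu, rfl⟩
  have hv : 0 ≤ v := (norm_nonneg _).trans hx0
  calc ‖S.phi t t0 x0 u‖ ≤ c + α ‖x0‖ + ρ (nrm u).toReal :=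
        hU t0 ht0 x0 u hu (hnu.trans_lt ENNReal.ofReal_lt_top) t ht
    _ ≤ c + α v + ρ v :=
        add_le_add (add_le_add_right (hα.1.monotoneOn (norm_nonneg _) hv hx0) _)
          (hρ.1.monotoneOn ENNReal.toReal_nonneg hv (ENNReal.toReal_le_of_le_ofReal hv hnu))

lemma worstNorm_nonneg : 0 ≤ worstNorm S nrm v :=
  Real.sSup_nonneg <| by
    rintro _ (rfl | ⟨_, _, _, _, _, _, _, _, _, rfl⟩)
    exacts [le_rfl, norm_nonneg _]

lemma monotone_worstNorm (h : UGB S nrm) : Monotone (worstNorm S nrm) := fun _ w hvw =>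
  csSup_le_csSup ((h.bddAbove_reachNorms w).insert 0) (insert_nonempty _ _) <|
    insert_subset_insert fun _ ⟨t0, t, x0, u, ht0, ht, hx0, hu, hnu, hz⟩ =>
      ⟨t0, t, x0, u, ht0, ht, hx0.trans hvw, hu, hnu.trans (ENNReal.ofReal_le_ofReal hvw), hz⟩

lemma norm_phi_le_worstNorm (h : UGB S nrm) (ht0 : 0 ≤ t0) (ht : t0 ≤ t) (hx0 : ‖x0‖ ≤ v)
    (hu : u ∈ S.U) (hnu : nrm u ≤ ENNReal.ofReal v) : ‖S.phi t t0 x0 u‖ ≤ worstNorm S nrm v :=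
  le_csSup ((h.bddAbove_reachNorms v).insert 0)
    (mem_insert_of_mem _ ⟨t0, t, x0, u, ht0, ht, hx0, hu, hnu, rfl⟩)

lemma norm_phi_le_worstNorm_add (h : UGB S nrm) (ht0 : 0 ≤ t0) (ht : t0 ≤ t) (x0 : X)
    (hu : u ∈ S.U) (hfin : nrm u < ⊤) :
    ‖S.phi t t0 x0 u‖ ≤ worstNorm S nrm ‖x0‖ + worstNorm S nrm (nrm u).toReal :=
  calc ‖S.phi t t0 x0 u‖ ≤ worstNorm S nrm (max ‖x0‖ (nrm u).toReal) :=
        norm_phi_le_worstNorm h ht0 ht (le_max_left _ _) hu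
          ((ENNReal.le_ofReal_iff_toReal_le hfin.ne ((norm_nonneg _).trans (le_max_left _ _))).2
            (le_max_right _ _))
    _ = max (worstNorm S nrm ‖x0‖) (worstNorm S nrm (nrm u).toReal) :=
        (monotone_worstNorm h).map_max
    _ ≤ _ := max_le_add_of_nonneg worstNorm_nonneg worstNorm_nonneg

end WorstNorm

/-- Uniform local stability. -/
def ULS (S : Sys X Uv) (nrm : (ℝ → Uv) → ENNReal) : Prop :=
  ∀ ε > (0 : ℝ), ∃ δ > (0 : ℝ), ∀ t0 ≥ (0 : ℝ), ∀ x0 : X, ‖x0‖ ≤ δ → ∀ u ∈ S.U,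
    nrm u ≤ ENNReal.ofReal δ → ∀ t ≥ t0, ‖S.phi t t0 x0 u‖ ≤ ε

namespace ULS

variable {S : Sys X Uv} {nrm : (ℝ → Uv) → ENNReal}

lemma exists_worstNorm_le (h : ULS S nrm) {ε : ℝ} (hε : 0 < ε) :
    ∃ δ > 0, worstNorm S nrm δ ≤ ε :=
  let ⟨δ, hδ, hS⟩ := h ε hε
  ⟨δ, hδ, csSup_le (insert_nonempty _ _) <| by
    rintro _ (rfl | ⟨t0, t, x0, u, ht0, ht, hx0, hu, hnu, rfl⟩)
    exacts [hε.le, hS t0 ht0 x0 hx0 u hu hnu t ht]⟩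

lemma tendsto_worstNorm (h : ULS S nrm) (hB : UGB S nrm) :
    Tendsto (worstNorm S nrm) (𝓝[>] 0) (𝓝 0) :=
  (monotone_worstNorm hB).tendsto_nhdsGT_zero (fun _ => worstNorm_nonneg)
    fun _ => h.exists_worstNorm_le

end ULS

section Stability

variable {S : Sys X Uv} {nrm : (ℝ → Uv) → ENNReal} {β : ℝ → ℝ → ℝ}

lemma exists_small_input_estimate (hadm : IsAdmissible S nrm) (hA1 : AssumptionA1 S nrm)
    (hG : ∀ t0 ≥ (0 : ℝ), ∀ x0 : X, ∀ t ≥ t0, ‖S.phi t t0 x0 (fun _ => 0)‖ ≤ β ‖x0‖ (t - t0))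
    (hB : UGB S nrm) (R : ℝ) {ε T : ℝ} (hε : 0 < ε) (hT : 0 < T) :
    ∃ δ > 0, ∀ τ ≥ (0 : ℝ), ∀ y : X, ‖y‖ ≤ R → ∀ w ∈ S.U, nrm w ≤ ENNReal.ofReal δ →
      ∀ t ∈ Icc τ (τ + T), ‖S.phi t τ y w‖ ≤ β ‖y‖ (t - τ) + ε := by
  set M := worstNorm S nrm (max R 1)
  have hM : 0 ≤ M := worstNorm_nonneg
  obtain ⟨δ, hδ, hA⟩ := hA1 (M + 1) (by linarith) ε hε T hT
  refine ⟨min δ 1, by positivity, fun τ hτ y hy w hw hnw t ht => ?_⟩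
  have hbound : ∀ v ∈ S.U, nrm v ≤ ENNReal.ofReal 1 → ∀ s ≥ τ, ‖S.phi s τ y v‖ ≤ M + 1 :=
    fun v hv hnv s hs => (norm_phi_le_worstNorm hB hτ hs (hy.trans (le_max_left _ _)) hv
      (hnv.trans (ENNReal.ofReal_le_ofReal (le_max_right _ _)))).trans
        (le_add_of_nonneg_right zero_le_one)
  have hclose := hA τ hτ y w hw (hnw.trans (ENNReal.ofReal_le_ofReal (min_le_left _ _))) (τ + T)
    ⟨by linarith, le_rfl⟩ (fun s hs =>
      ⟨hbound w hw (hnw.trans (ENNReal.ofReal_le_ofReal (min_le_right _ _))) s hs.1,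
        hbound _ S.zero_mem (by simp [hadm.zero]) s hs.1⟩) t ht
  calc ‖S.phi t τ y w‖ ≤ ‖S.phi t τ y (fun _ => 0)‖ + ‖S.phi t τ y (fun _ => 0) - S.phi t τ y w‖ :=
        norm_le_norm_add_norm_sub _ _
    _ ≤ β ‖y‖ (t - τ) + ε := add_le_add (hG τ hτ y t ht.1) hclose

theorem uls_of_zeroGUAS_of_ugb (hadm : IsAdmissible S nrm) (hA1 : AssumptionA1 S nrm)
    (hβ : ClassKL β)
    (hG : ∀ t0 ≥ (0 : ℝ), ∀ x0 : X, ∀ t ≥ t0, ‖S.phi t t0 x0 (fun _ => 0)‖ ≤ β ‖x0‖ (t - t0))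
    (hB : UGB S nrm) : ULS S nrm := by
  intro ε hε
  obtain ⟨δ₀, hδ₀, hβδ₀⟩ := hβ.exists_pos_le_at_zero (half_pos hε)
  set μ := min δ₀ ε
  have hμ : 0 < μ := lt_min hδ₀ hε
  obtain ⟨T, hT, hβT⟩ := hβ.exists_pos_time_le hμ.le (half_pos hμ)
  obtain ⟨δ, hδ, hwin⟩ := exists_small_input_estimate hadm hA1 hG hB μ (half_pos hμ) hT
  refine ⟨min μ δ, lt_min hμ hδ, fun t0 ht0 x0 hx0 u hu hnu => ?_⟩
  have hstep : ∀ τ ≥ t0, ‖S.phi τ t0 x0 u‖ ≤ μ →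
      ∀ t ∈ Icc τ (τ + T), ‖S.phi t t0 x0 u‖ ≤ β μ (t - τ) + μ / 2 := by
    intro τ hτ hy t ht
    rw [← S.phi_phi hu ht0 hτ ht.1]
    exact (hwin τ (ht0.trans hτ) _ hy u hu
      (hnu.trans (ENNReal.ofReal_le_ofReal (min_le_right _ _))) t ht).trans
      (add_le_add (hβ.mono_left (norm_nonneg _) hy (sub_nonneg.2 ht.1)) le_rfl)
  have hgrid : ∀ k : ℕ, ‖S.phi (t0 + k * T) t0 x0 u‖ ≤ μ := by
    intro k
    induction k with
    | zero => simpa [S.identity t0 ht0 x0 u hu] using hx0.trans (min_le_left _ _)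
    | succ k ih =>
      have := hstep _ (le_add_of_nonneg_right (by positivity)) ih (t0 + k * T + T)
        ⟨by linarith, le_rfl⟩
      rw [add_sub_cancel_left] at this
      rw [Nat.cast_succ, add_one_mul, ← add_assoc]
      linarith
  intro t ht
  set k := ⌊(t - t0) / T⌋₊
  have hk : k * T ≤ t - t0 := (le_div_iff₀ hT).1 (Nat.floor_le (div_nonneg (by linarith) hT.le))
  have hk' : t - t0 < (k + 1) * T := (div_lt_iff₀ hT).1 (Nat.lt_floor_add_one _)
  have := hstep _ (le_add_of_nonneg_right (by positivity)) (hgrid k) t ⟨by linarith, by linarith⟩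
  linarith [hβ.anti_right hμ.le le_rfl (show 0 ≤ t - (t0 + k * T) by linarith),
    hβ.mono_left hμ.le (min_le_left δ₀ ε) le_rfl, min_le_right δ₀ ε]

end Stability

section Attractivity

variable {S : Sys X Uv} {nrm : (ℝ → Uv) → ENNReal} {β : ℝ → ℝ → ℝ}

theorem exists_time_norm_phi_le_add_worstNorm (hadm : IsAdmissible S nrm) (hE : CondE S nrm)
    (hA1 : AssumptionA1 S nrm) (hβ : ClassKL β)
    (hG : ∀ t0 ≥ (0 : ℝ), ∀ x0 : X, ∀ t ≥ t0, ‖S.phi t t0 x0 (fun _ => 0)‖ ≤ β ‖x0‖ (t - t0))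
    (hB : UGB S nrm) (hS : ULS S nrm) (r : ℝ) {ε : ℝ} (hε : 0 < ε) :
    ∃ T, ∀ t0 ≥ (0 : ℝ), ∀ x0 : X, ‖x0‖ ≤ r → ∀ u ∈ S.U, nrm u < ⊤ → ∀ t ≥ t0 + T,
      ‖S.phi t t0 x0 u‖ ≤ ε + worstNorm S nrm (nrm u).toReal := by
  obtain ⟨μ, hμ, hwμ⟩ := hS.exists_worstNorm_le hε
  set M := worstNorm S nrm r
  obtain ⟨Tw, hTw, hβTw⟩ := hβ.exists_pos_time_le (worstNorm_nonneg : 0 ≤ M) (half_pos hμ)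
  obtain ⟨δ, hδ, hwin⟩ := exists_small_input_estimate hadm hA1 hG hB M (half_pos hμ) hTw
  obtain ⟨N, hN⟩ := exists_nat_ge (r / δ)
  refine ⟨(N + 2) * Tw, fun t0 ht0 x0 hx0 u hu hfin t ht => ?_⟩
  set s := (nrm u).toReal
  have hus : nrm u = ENNReal.ofReal s := (ENNReal.ofReal_toReal hfin.ne).symm
  have htt0 : t0 ≤ t := le_of_add_le_of_nonneg_left ht (by positivity)
  rcases le_or_gt r s with hrs | hsr
  · exact (norm_phi_le_worstNorm hB ht0 htt0 (hx0.trans hrs) hu hus.le).trans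
      (le_add_of_nonneg_left hε.le)
  obtain ⟨k, hkN, hk⟩ := hE.exists_quiet_window hadm hu hfin ht0 hTw hδ
    (hsr.trans_le ((div_le_iff₀ hδ).1 hN))
  set τ := t0 + (k + 1) * Tw
  have hτ : 0 < τ := by positivity
  have ht0τ : t0 ≤ τ := le_add_of_nonneg_right (by positivity)
  have hτt : τ + Tw ≤ t := by
    have : (k : ℝ) ≤ N := by exact_mod_cast hkN
    nlinarith
  have hy : ‖S.phi τ t0 x0 u‖ ≤ M :=
    norm_phi_le_worstNorm hB ht0 ht0τ hx0 hu (hus ▸ ENNReal.ofReal_le_ofReal hsr.le)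
  have hsmall : ‖S.phi (τ + Tw) t0 x0 u‖ ≤ μ := by
    rw [← S.phi_phi hu ht0 ht0τ (by linarith), ← S.phi_trunc hu hτ (by linarith)]
    have := hwin τ hτ.le _ hy _ (Sys.trunc_mem hu hτ (by linarith)) hk (τ + Tw)
      ⟨by linarith, le_rfl⟩
    rw [add_sub_cancel_left] at this
    linarith [hβ.mono_left (norm_nonneg _) hy hTw.le]
  calc ‖S.phi t t0 x0 u‖ = ‖S.phi t (τ + Tw) (S.phi (τ + Tw) t0 x0 u) u‖ := by
        rw [S.phi_phi hu ht0 (by linarith) hτt]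
    _ ≤ worstNorm S nrm ‖S.phi (τ + Tw) t0 x0 u‖ + worstNorm S nrm s :=
        norm_phi_le_worstNorm_add hB (by linarith) hτt _ hu hfin
    _ ≤ ε + worstNorm S nrm s := add_le_add ((monotone_worstNorm hB hsmall).trans hwμ) le_rfl

end Attractivity

section Characterization

variable {S : Sys X Uv} {nrm : (ℝ → Uv) → ENNReal}

theorem iss_of_uls_of_attractive (hB : UGB S nrm) (hS : ULS S nrm)
    (hatt : ∀ r, ∀ ε > (0 : ℝ), ∃ T, ∀ t0 ≥ (0 : ℝ), ∀ x0 : X, ‖x0‖ ≤ r → ∀ u ∈ S.U,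
      nrm u < ⊤ → ∀ t ≥ t0 + T, ‖S.phi t t0 x0 u‖ ≤ ε + worstNorm S nrm (nrm u).toReal) :
    ISS S nrm := by
  obtain ⟨ρ, hρ, hwρ⟩ := exists_classKInf_ge (monotone_worstNorm hB) (hS.tendsto_worstNorm hB)
  obtain ⟨β, hβ, hzβ⟩ := exists_classKL_of_bound (fun r τ z => ∃ t0 x0 u t, 0 ≤ t0 ∧ t0 ≤ t ∧
      ‖x0‖ = r ∧ t - t0 = τ ∧ u ∈ S.U ∧ nrm u < ⊤ ∧
      ‖S.phi t t0 x0 u‖ - worstNorm S nrm (nrm u).toReal = z)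
    (fun R => ⟨worstNorm S nrm R, by
      rintro _ _ _ ⟨t0, x0, u, t, ht0, ht, rfl, rfl, hu, hfin, rfl⟩ hR
      linarith [norm_phi_le_worstNorm_add hB ht0 ht x0 hu hfin, monotone_worstNorm hB hR]⟩)
    (fun ε hε => let ⟨δ, hδ, hδε⟩ := hS.exists_worstNorm_le hε; ⟨δ, hδ, by
      rintro _ _ _ ⟨t0, x0, u, t, ht0, ht, rfl, rfl, hu, hfin, rfl⟩ hr
      linarith [norm_phi_le_worstNorm_add hB ht0 ht x0 hu hfin, monotone_worstNorm hB hr]⟩)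
    (fun R ε hε => let ⟨T, hT⟩ := hatt R ε hε; ⟨T, by
      rintro _ _ _ ⟨t0, x0, u, t, ht0, ht, rfl, rfl, hu, hfin, rfl⟩ hR hTt
      linarith [hT t0 ht0 x0 hR u hu hfin t (by linarith)]⟩)
  refine ⟨β, ρ, hβ, hρ, fun t0 ht0 x0 u hu hfin t ht => ?_⟩
  linarith [hzβ _ _ _ ⟨t0, x0, u, t, ht0, ht, rfl, rfl, hu, hfin, rfl⟩ (norm_nonneg _)
    (sub_nonneg.2 ht), hwρ _ (ENNReal.toReal_nonneg (a := nrm u))]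

theorem ISS.zeroGUAS (hadm : IsAdmissible S nrm) (h : ISS S nrm) : ZeroGUAS S := by
  obtain ⟨β, ρ, hβ, hρ, hest⟩ := h
  refine ⟨β, hβ, fun t0 ht0 x0 t ht => ?_⟩
  simpa [hadm.zero, hρ.1.2.2] using hest t0 ht0 x0 _ S.zero_mem (by simp [hadm.zero]) t ht

theorem ISS.ugb (h : ISS S nrm) : UGB S nrm := by
  obtain ⟨β, ρ, hβ, hρ, hest⟩ := h
  have hβ0 := hβ.1 0 le_rfl
  refine ⟨0, fun r => β r 0 + r, ρ, le_rfl, classKInf_add_id hβ0.1 hβ0.monotoneOn hβ0.2.2, hρ,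
    fun t0 ht0 x0 u hu hfin t ht => ?_⟩
  linarith [hest t0 ht0 x0 u hu hfin t ht, norm_nonneg x0,
    hβ.anti_right (norm_nonneg x0) le_rfl (sub_nonneg.2 ht)]

end Characterization

/-- Theorem 3.3 (main result): for a forward complete system endowed with an admissible
functional satisfying condition (E) and satisfying Assumption 1, the combination
0-GUAS ∧ UBEBS is equivalent to iISS. -/
theorem zeroGUAS_and_UBEBS_iff_iISS (S : Sys X Uv) (nrm : (ℝ → Uv) → ENNReal)
    (hadm : IsAdmissible S nrm) (hE : CondE S nrm) (hA1 : AssumptionA1 S nrm) :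
    (ZeroGUAS S ∧ UGB S nrm) ↔ ISS S nrm := by
  refine ⟨fun ⟨⟨β, hβ, hG⟩, hB⟩ => ?_, fun h => ⟨h.zeroGUAS hadm, h.ugb⟩⟩
  have hS := uls_of_zeroGUAS_of_ugb hadm hA1 hβ hG hB
  exact iss_of_uls_of_attractive hB hS fun r _ hε =>
    exists_time_norm_phi_le_add_worstNorm hadm hE hA1 hβ hG hB hS r hε
end

section
/- Let Σ=(X,U,φ) be a forward complete system with inputs which is 0-GUAS, endowed with an admissible functional ‖·‖_U, and let Assumption A1 hold. Let β∈KL be the function given by the definition of 0-GUAS. Then, for every r>0, η>0 and T>0, there exists γ=γ(r,η,T)>0 such that: if t0≥0, x∈X and u∈U satisfy ‖φ(t,t0,x,u)‖_X ≤ r for all t∈[t0,t0+T] and ‖u‖_U ≤ γ, then ‖φ(t,t0,x,u)‖_X ≤ β(‖x‖_X, t−t0)+η for all t∈[t0,t0+T]. -/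
open Set Filter

variable {X Uv : Type*} [NormedAddCommGroup X] [NormedSpace ℝ X]
  [AddCommGroup Uv] [Module ℝ Uv]

/-- Lemma 3.6: for a forward complete 0-GUAS system (with KL-estimate `β`) satisfying
Assumption 1, trajectories that stay in a ball of radius `r` on `[t0, t0+T]` and correspond
to inputs of size at most `γ` satisfy the 0-GUAS estimate up to an error `η`. -/
theorem small_input_beta_bound (S : Sys X Uv) (nrm : (ℝ → Uv) → ENNReal)
    (hadm : IsAdmissible S nrm) (hA1 : AssumptionA1 S nrm)
    (β : ℝ → ℝ → ℝ) (hβ : ClassKL β)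
    (hguas : ∀ t0 ≥ (0:ℝ), ∀ x0 : X, ∀ t ≥ t0,
      ‖S.phi t t0 x0 (fun _ => 0)‖ ≤ β ‖x0‖ (t - t0)) :
    ∀ r > (0:ℝ), ∀ η > (0:ℝ), ∀ T > (0:ℝ), ∃ γ > (0:ℝ),
      ∀ t0 ≥ (0:ℝ), ∀ x : X, ∀ u ∈ S.U,
        (∀ t ∈ Icc t0 (t0 + T), ‖S.phi t t0 x u‖ ≤ r) →
        nrm u ≤ ENNReal.ofReal γ →
        ∀ t ∈ Icc t0 (t0 + T), ‖S.phi t t0 x u‖ ≤ β ‖x‖ (t - t0) + η := by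
  intro r hr η hη T hT
  -- radius for A1
  set r' : ℝ := max r (β r 0) with hr'
  have hr'pos : 0 < r' := lt_of_lt_of_le hr (le_max_left _ _)
  obtain ⟨δ, hδ, hA⟩ := hA1 r' hr'pos η hη T hT
  refine ⟨δ, hδ, ?_⟩
  intro t0 ht0 x u huU hbound hnrm t ht
  have hx0 : ‖x‖ ≤ r := by
    have := hbound t0 ⟨le_rfl, by linarith⟩
    rwa [S.identity t0 ht0 x u huU] at this
  -- monotonicity facts about β
  have hmono := (hβ.1 0 le_rfl).2.1.monotoneOn
  have hβx_le : ∀ s : ℝ, t0 ≤ s → β ‖x‖ (s - t0) ≤ β r 0 := by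
    intro s hs
    have h1 : β ‖x‖ (s - t0) ≤ β ‖x‖ 0 :=
      (hβ.2 ‖x‖ (norm_nonneg x)).1 (by simp) (by simp; linarith) (by linarith)
    have h2 : β ‖x‖ 0 ≤ β r 0 := hmono (norm_nonneg x) hr.le hx0
    linarith
  -- the zero-input trajectory stays in the ball of radius r'
  have hz : ∀ s ∈ Icc t0 (t0 + T), ‖S.phi s t0 x (fun _ => 0)‖ ≤ r' := by
    intro s hs
    have := hguas t0 ht0 x s hs.1
    exact this.trans ((hβx_le s hs.1).trans (le_max_right _ _))
  have hclose := hA t0 ht0 x u huU hnrm (t0 + T) ⟨by linarith, le_rfl⟩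
    (fun s hs => ⟨(hbound s hs).trans (le_max_left _ _), hz s hs⟩) t ht
  have := hguas t0 ht0 x t ht.1
  calc ‖S.phi t t0 x u‖
      ≤ ‖S.phi t t0 x (fun _ => 0)‖ + ‖S.phi t t0 x (fun _ => 0) - S.phi t t0 x u‖ := by
        have := norm_sub_norm_le (S.phi t t0 x (fun _ => 0)) (S.phi t t0 x u)
        have h := norm_sub_rev (S.phi t t0 x (fun _ => 0)) (S.phi t t0 x u)
        linarith [norm_sub_norm_le (S.phi t t0 x u) (S.phi t t0 x (fun _ => 0)),
          norm_sub_rev (S.phi t t0 x u) (S.phi t t0 x (fun _ => 0))]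
    _ ≤ β ‖x‖ (t - t0) + η := by linarith
end

section
/- Let τ≥0, n∈ℕ, and let β be a function of class KL such that β(r,0)≥r for all r≥0. Then there exists a function β̃ of class KL with β(r,t) ≤ β̃(r,t) for all r,t≥0, such that for every t0≥0, every c≥0, every d≥0 and every continuous function x:[t0−τ,∞)→ℝⁿ satisfying |x(t)| ≤ c for all t∈[t0−τ,t0] and |x(t)| ≤ β(c, t−t0)+d for all t≥t0, it holds that sup over s∈[−τ,0] of |x(t+s)| ≤ β̃(c, t−t0)+d for all t≥t0. (This is the key step in the proof of Proposition 4.2, showing that a pointwise KL estimate on a solution of a time-delay system yields a KL estimate on the sup-norm of the state segment x_t.) -/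
open Set Filter

/-!
Take `β̃(r, t) = β(r, max (t - τ) 0)`, i.e. `β` delayed by `τ` and frozen at `β(r, 0)` on `[0, τ]`.
A point `t + s` of the segment at time `t` lies either in the initial interval, where
`|x| ≤ c ≤ β(c, 0)`, or after `t0`, at an elapsed time of at least `t - t0 - τ`, where the
monotonicity of `β` in time gives the bound.
-/

def delayKL (β : ℝ → ℝ → ℝ) (τ : ℝ) : ℝ → ℝ → ℝ :=
  fun r t => β r (max (t - τ) 0)

lemma AntitoneOn.comp_max_sub {g : ℝ → ℝ} (hg : AntitoneOn g (Ici 0)) (τ : ℝ) :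
    Antitone fun t => g (max (t - τ) 0) :=
  fun _ _ hab => hg (mem_Ici.2 (le_max_right _ _)) (mem_Ici.2 (le_max_right _ _))
    (max_le_max (by linarith) le_rfl)

lemma Filter.Tendsto.comp_max_sub {g : ℝ → ℝ} {l : Filter ℝ} (hg : Tendsto g atTop l) (τ : ℝ) :
    Tendsto (fun t => g (max (t - τ) 0)) atTop l :=
  hg.comp <| tendsto_atTop_mono (fun t => le_max_left (t - τ) 0)
    (tendsto_atTop_add_const_right _ _ tendsto_id)

lemma ClassKL.delay {β : ℝ → ℝ → ℝ} (hβ : ClassKL β) (τ : ℝ) : ClassKL (delayKL β τ) :=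
  ⟨fun _ _ => hβ.1 _ (le_max_right _ _),
    fun r hr => ⟨((hβ.2 r hr).1.comp_max_sub τ).antitoneOn _, (hβ.2 r hr).2.comp_max_sub τ⟩⟩

lemma ClassKL.le_delayKL {β : ℝ → ℝ → ℝ} (hβ : ClassKL β) {τ : ℝ} (hτ : 0 ≤ τ) {r t : ℝ}
    (hr : 0 ≤ r) (ht : 0 ≤ t) : β r t ≤ delayKL β τ r t :=
  (hβ.2 r hr).1 (mem_Ici.2 (le_max_right _ _)) (mem_Ici.2 ht) (max_le (by linarith) ht)

lemma norm_le_of_initial_bound_of_decay_bound {E : Type*} [SeminormedAddCommGroup E]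
    {x : ℝ → E} {g : ℝ → ℝ} (hg : AntitoneOn g (Ici 0)) {τ t0 c d t s : ℝ} (hc : c ≤ g 0)
    (hd : 0 ≤ d) (hinit : ∀ u ∈ Icc (t0 - τ) t0, ‖x u‖ ≤ c)
    (hdecay : ∀ u ≥ t0, ‖x u‖ ≤ g (u - t0) + d) (ht : t0 ≤ t) (hs : -τ ≤ s) :
    ‖x (t + s)‖ ≤ g (max (t - t0 - τ) 0) + d := by
  rcases le_total (t + s) t0 with hpast | hfuture
  · have hmax : max (t - t0 - τ) 0 = 0 := max_eq_right (by linarith)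
    calc ‖x (t + s)‖ ≤ c := hinit _ ⟨by linarith, hpast⟩
      _ ≤ g (max (t - t0 - τ) 0) + d := by rw [hmax]; linarith
  · calc ‖x (t + s)‖ ≤ g (t + s - t0) + d := hdecay _ hfuture
      _ ≤ g (max (t - t0 - τ) 0) + d := by
        gcongr
        exact hg (mem_Ici.2 (le_max_right _ _)) (mem_Ici.2 (by linarith))
          (max_le (by linarith) (by linarith))

/-- Key step in the proof of Proposition 4.2: a pointwise KL estimate on a solution of a
time-delay system yields a KL estimate (with a possibly larger KL function `β̃ ≥ β`) on the
supremum norm of the state segment `x_t`. -/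
theorem pointwise_KL_to_segment_KL (τ : ℝ) (hτ : 0 ≤ τ) (n : ℕ)
    (β : ℝ → ℝ → ℝ) (hβ : ClassKL β) (hβ0 : ∀ r ≥ (0:ℝ), r ≤ β r 0) :
    ∃ β' : ℝ → ℝ → ℝ, ClassKL β' ∧
      (∀ r ≥ (0:ℝ), ∀ t ≥ (0:ℝ), β r t ≤ β' r t) ∧
      ∀ t0 ≥ (0:ℝ), ∀ c ≥ (0:ℝ), ∀ d ≥ (0:ℝ),
        ∀ x : ℝ → EuclideanSpace ℝ (Fin n),
          ContinuousOn x (Ici (t0 - τ)) →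
          (∀ t ∈ Icc (t0 - τ) t0, ‖x t‖ ≤ c) →
          (∀ t ≥ t0, ‖x t‖ ≤ β c (t - t0) + d) →
          ∀ t ≥ t0, ∀ s ∈ Icc (-τ) (0:ℝ), ‖x (t + s)‖ ≤ β' c (t - t0) + d := by
  refine ⟨delayKL β τ, hβ.delay τ, fun r hr t ht => hβ.le_delayKL hτ hr ht, ?_⟩
  intro t0 _ c hc d hd x _ hinit hdecay t ht s hs
  exact norm_le_of_initial_bound_of_decay_bound (hβ.2 c hc).1 (hβ0 c hc) hd hinit hdecay ht hs.1
end

section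
/- Let τ≥0, t0≥0, t≥t0, and let ψ:[t0−τ,t]→ℝ be continuous and nonnegative. For s∈[t0,t] define ‖ψ_s‖ = sup{ψ(s+r): r∈[−τ,0]}. Suppose there are constants K,L≥0 such that ψ(ℓ) ≤ K + L∫_{t0}^{ℓ} ‖ψ_s‖ ds for all ℓ∈[t0,t]. Then ‖ψ_ℓ‖ ≤ (K+‖ψ_{t0}‖) e^{L(ℓ−t0)} for all ℓ∈[t0,t]. -/
/-!
Every point of the window `[ℓ - τ, ℓ]` lies either in the initial window `[t0 - τ, t0]`, where
`ψ ≤ ‖ψ_{t0}‖`, or in `[t0, ℓ]`, where the hypothesis bounds `ψ` by the nondecreasing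
`K + L ∫_{t0}^{ℓ} ‖ψ_s‖ ds`. Hence `s ↦ ‖ψ_s‖`, which is continuous, satisfies the memoryless
integral inequality with constant `K + ‖ψ_{t0}‖`, and the classical Grönwall lemma applies.
-/

open Set Filter MeasureTheory

/-- The supremum of `ψ` over the memory window `[s-τ, s]` (the norm `‖ψ_s‖` of the segment). -/
noncomputable def segSup (τ : ℝ) (ψ : ℝ → ℝ) (s : ℝ) : ℝ :=
  sSup (ψ '' Icc (s - τ) s)

open Topology Real

theorem monotoneOn_integral_of_nonneg {f : ℝ → ℝ} {a b : ℝ} (hf : IntegrableOn f (Icc a b))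
    (h0 : ∀ x ∈ Icc a b, 0 ≤ f x) : MonotoneOn (fun x => ∫ s in a..x, f s) (Icc a b) := by
  intro u hu v hv huv
  have hfv : IntervalIntegrable f volume a v := (intervalIntegrable_iff_integrableOn_Icc_of_le hv.1).2
    (hf.mono_set (Icc_subset_Icc_right hv.2))
  refine intervalIntegral.integral_mono_interval le_rfl hu.1 huv ?_ hfv
  filter_upwards [ae_restrict_mem measurableSet_Ioc] with s hs
  exact h0 s ⟨hs.1.le, hs.2.trans hv.2⟩

theorem self_add_mul_gronwallBound_zero (K ε x : ℝ) :
    ε + K * gronwallBound 0 K ε x = ε * exp (K * x) := by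
  rcases eq_or_ne K 0 with rfl | hK
  · simp
  · rw [gronwallBound_of_K_ne_0 hK]
    field_simp
    ring

theorem hasDerivWithinAt_integral_Ici_of_continuousOn {f : ℝ → ℝ} {a b x : ℝ}
    (hf : ContinuousOn f (Icc a b)) (hx : x ∈ Ico a b) :
    HasDerivWithinAt (fun u => ∫ s in a..u, f s) (f x) (Ici x) x := by
  have hIcc : Icc x b ∈ 𝓝[>] x := Icc_mem_nhdsGT_of_mem ⟨le_rfl, hx.2⟩
  have hfx : ContinuousOn f (Icc x b) := hf.mono (Icc_subset_Icc_left hx.1)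
  exact intervalIntegral.integral_hasDerivWithinAt_right (t := Ioi x)
    ((hf.mono (Icc_subset_Icc_right hx.2.le)).intervalIntegrable_of_Icc hx.1)
    ⟨Icc x b, hIcc, hfx.aestronglyMeasurable measurableSet_Icc⟩
    ((hfx x ⟨le_rfl, hx.2.le⟩).mono_of_mem_nhdsWithin hIcc)

theorem le_mul_exp_of_le_add_mul_integral {φ : ℝ → ℝ} {a b C L : ℝ} (hL : 0 ≤ L)
    (hφ : ContinuousOn φ (Icc a b)) (h : ∀ x ∈ Icc a b, φ x ≤ C + L * ∫ s in a..x, φ s) :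
    ∀ x ∈ Icc a b, φ x ≤ C * exp (L * (x - a)) := by
  set G : ℝ → ℝ := fun x => ∫ s in a..x, φ s
  have hG : ContinuousOn G (Icc a b) := by
    rcases le_or_gt a b with hab | hab
    · rw [← uIcc_of_le hab] at hφ ⊢
      exact intervalIntegral.continuousOn_primitive_interval hφ.integrableOn_uIcc
    · simp [Icc_eq_empty_of_lt hab]
  have hGbound := le_gronwallBound_of_liminf_deriv_right_le (δ := 0) hG
    (fun x hx _ hr => by
      simpa only [slope, smul_eq_mul, vsub_eq_sub] using
        (hasDerivWithinAt_integral_Ici_of_continuousOn hφ hx).liminf_right_slope_le hr)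
    (by simp [G]) (fun x hx => (h x (Ico_subset_Icc_self hx)).trans_eq (add_comm _ _))
  intro x hx
  calc φ x ≤ C + L * G x := h x hx
    _ ≤ C + L * gronwallBound 0 L C (x - a) := by gcongr; exact hGbound x hx
    _ = C * exp (L * (x - a)) := self_add_mul_gronwallBound_zero L C (x - a)

section segSup

variable {τ : ℝ} {ψ : ℝ → ℝ}

theorem le_segSup {s u : ℝ} (hψ : ContinuousOn ψ (Icc (s - τ) s)) (hu : u ∈ Icc (s - τ) s) :
    ψ u ≤ segSup τ ψ s :=
  le_csSup (isCompact_Icc.bddAbove_image hψ) (mem_image_of_mem ψ hu)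

theorem segSup_le {s c : ℝ} (hτ : 0 ≤ τ) (h : ∀ u ∈ Icc (s - τ) s, ψ u ≤ c) :
    segSup τ ψ s ≤ c :=
  csSup_le ((nonempty_Icc.2 (by linarith)).image ψ) (forall_mem_image.2 h)

theorem segSup_nonneg {s : ℝ} (hτ : 0 ≤ τ) (hψ : ContinuousOn ψ (Icc (s - τ) s))
    (h : 0 ≤ ψ s) : 0 ≤ segSup τ ψ s :=
  h.trans (le_segSup hψ ⟨by linarith, le_rfl⟩)

theorem segSup_eq_sSup_image_add (τ : ℝ) (ψ : ℝ → ℝ) (s : ℝ) :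
    segSup τ ψ s = sSup ((fun r => ψ (s + r)) '' Icc (-τ) 0) := by
  rw [segSup, ← image_image ψ (s + ·), image_const_add_Icc, add_zero, ← sub_eq_add_neg]

theorem continuous_segSup (τ : ℝ) (hψ : Continuous ψ) : Continuous (segSup τ ψ) := by
  simp_rw [funext (segSup_eq_sSup_image_add τ ψ)]
  exact isCompact_Icc.continuous_sSup (by fun_prop)

theorem segSup_eqOn {ψ' : ℝ → ℝ} {a b : ℝ} (h : EqOn ψ ψ' (Icc (a - τ) b)) :
    EqOn (segSup τ ψ) (segSup τ ψ') (Icc a b) := fun s hs => by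
  rw [segSup, segSup, image_congr (h.mono (Icc_subset_Icc (by linarith [hs.1]) hs.2))]

theorem continuousOn_segSup {a b : ℝ} (hτ : 0 ≤ τ) (hψ : ContinuousOn ψ (Icc (a - τ) b)) :
    ContinuousOn (segSup τ ψ) (Icc a b) := by
  rcases le_or_gt a b with hab | hab
  · have hab' : a - τ ≤ b := by linarith
    -- Clamping to `[a - τ, b]` extends `ψ` continuously to `ℝ` without changing any window.
    have hext : Continuous fun x => ψ (projIcc (a - τ) b hab' x) :=
      hψ.comp_continuous (by fun_prop) fun x => (projIcc _ _ hab' x).2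
    refine (continuous_segSup τ hext).continuousOn.congr (segSup_eqOn fun u hu => ?_)
    simp [projIcc_of_mem hab' hu]
  · simp [Icc_eq_empty_of_lt hab]

theorem segSup_le_max_of_le {t0 t : ℝ} {B : ℝ → ℝ} (hτ : 0 ≤ τ)
    (hψ : ContinuousOn ψ (Icc (t0 - τ) t)) (hB : MonotoneOn B (Icc t0 t))
    (h : ∀ u ∈ Icc t0 t, ψ u ≤ B u) :
    ∀ ℓ ∈ Icc t0 t, segSup τ ψ ℓ ≤ max (segSup τ ψ t0) (B ℓ) := by
  intro ℓ hℓ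
  refine segSup_le hτ fun u hu => ?_
  rcases le_total u t0 with hut | htu
  · refine le_max_of_le_left (le_segSup (hψ.mono (Icc_subset_Icc_right (hℓ.1.trans hℓ.2))) ?_)
    exact ⟨by linarith [hu.1, hℓ.1], hut⟩
  · have hu' : u ∈ Icc t0 t := ⟨htu, hu.2.trans hℓ.2⟩
    exact le_max_of_le_right ((h u hu').trans (hB hu' hℓ hu.2))

end segSup

theorem gronwall_with_memory_general (τ : ℝ) (hτ : 0 ≤ τ) (t0 t : ℝ)
    (ψ : ℝ → ℝ) (hcont : ContinuousOn ψ (Icc (t0 - τ) t))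
    (hnonneg : ∀ s ∈ Icc (t0 - τ) t, 0 ≤ ψ s)
    (K L : ℝ) (hK : 0 ≤ K) (hL : 0 ≤ L)
    (hineq : ∀ ℓ ∈ Icc t0 t, ψ ℓ ≤ K + L * ∫ s in t0..ℓ, segSup τ ψ s) :
    ∀ ℓ ∈ Icc t0 t, segSup τ ψ ℓ ≤ (K + segSup τ ψ t0) * Real.exp (L * (ℓ - t0)) := by
  set φ := segSup τ ψ
  have hφc : ContinuousOn φ (Icc t0 t) := continuousOn_segSup hτ hcont
  have hφ0 : ∀ s ∈ Icc t0 t, 0 ≤ φ s := fun s hs =>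
    segSup_nonneg hτ (hcont.mono (Icc_subset_Icc (by linarith [hs.1]) hs.2))
      (hnonneg s ⟨by linarith [hs.1], hs.2⟩)
  have hmono : MonotoneOn (fun ℓ => K + L * ∫ s in t0..ℓ, φ s) (Icc t0 t) :=
    fun u hu v hv huv => add_le_add le_rfl (mul_le_mul_of_nonneg_left
      (monotoneOn_integral_of_nonneg hφc.integrableOn_Icc hφ0 hu hv huv) hL)
  refine le_mul_exp_of_le_add_mul_integral hL hφc fun ℓ hℓ => ?_
  have hK_le : K ≤ K + L * ∫ s in t0..ℓ, φ s := by
    simpa using hmono (left_mem_Icc.2 (hℓ.1.trans hℓ.2)) hℓ hℓ.1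
  calc φ ℓ ≤ max (φ t0) (K + L * ∫ s in t0..ℓ, φ s) :=
        segSup_le_max_of_le hτ hcont hmono hineq ℓ hℓ
    _ ≤ K + φ t0 + L * ∫ s in t0..ℓ, φ s :=
        max_le (by linarith) (by linarith [hφ0 t0 (left_mem_Icc.2 (hℓ.1.trans hℓ.2))])

/-- Lemma A.1 (Gronwall-type inequality for functions with memory): if a continuous
nonnegative `ψ` satisfies `ψ(ℓ) ≤ K + L ∫_{t0}^{ℓ} ‖ψ_s‖ ds` on `[t0, t]`, then
`‖ψ_ℓ‖ ≤ (K + ‖ψ_{t0}‖) e^{L(ℓ - t0)}` on `[t0, t]`. -/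
theorem gronwall_with_memory (τ : ℝ) (hτ : 0 ≤ τ) (t0 t : ℝ) (ht0 : 0 ≤ t0) (ht : t0 ≤ t)
    (ψ : ℝ → ℝ) (hcont : ContinuousOn ψ (Icc (t0 - τ) t))
    (hnonneg : ∀ s ∈ Icc (t0 - τ) t, 0 ≤ ψ s)
    (K L : ℝ) (hK : 0 ≤ K) (hL : 0 ≤ L)
    (hineq : ∀ ℓ ∈ Icc t0 t, ψ ℓ ≤ K + L * ∫ s in t0..ℓ, segSup τ ψ s) :
    ∀ ℓ ∈ Icc t0 t, segSup τ ψ ℓ ≤ (K + segSup τ ψ t0) * Real.exp (L * (ℓ - t0)) :=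
  gronwall_with_memory_general τ hτ t0 t ψ hcont hnonneg K L hK hL hineq
end

section
/- Let C=C([−τ,0],ℝⁿ) with supremum norm ‖·‖ and let f:[0,∞)×C×ℝᵐ→ℝⁿ satisfy conditions (R1) and (R2), with γ∈K∞ from (R1). Then for every r>0 and η>0 there exists k=k(r,η)>0 such that for all t≥0, all ψ∈C with ‖ψ‖≤r and all μ∈ℝᵐ: |f(t,ψ,μ)−f(t,ψ,0)| ≤ η + k·γ(|μ|). -/
open Set Filter MeasureTheory

noncomputable section

/-- The space `C([-τ,0], ℝⁿ)` of continuous histories, with the supremum norm. -/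
abbrev Hist (τ : ℝ) (n : ℕ) := C(Icc (-τ) (0:ℝ), EuclideanSpace ℝ (Fin n))

/-- The segment `x_t ∈ C([-τ,0], ℝⁿ)` of a continuous function `x : ℝ → ℝⁿ`,
defined by `x_t(s) = x(t+s)`. -/
def seg {n : ℕ} (τ : ℝ) (x : C(ℝ, EuclideanSpace ℝ (Fin n))) (t : ℝ) : Hist τ n :=
  x.comp ⟨fun s : Icc (-τ) (0:ℝ) => t + (s : ℝ), by continuity⟩

variable {τ : ℝ} {n m : ℕ}

/-- Condition (R1), with the bound witnessed by `γ ∈ K∞` and a nondecreasing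
`N : [0,∞) → (0,∞)`. -/
def CondR1With (f : ℝ → Hist τ n → EuclideanSpace ℝ (Fin m) → EuclideanSpace ℝ (Fin n))
    (γ N : ℝ → ℝ) : Prop :=
  ClassKInf γ ∧ MonotoneOn N (Ici 0) ∧ (∀ r ≥ (0:ℝ), 0 < N r) ∧
    ∀ t ≥ (0:ℝ), ∀ ψ : Hist τ n, ∀ μ, ‖f t ψ μ‖ ≤ N ‖ψ‖ * (1 + γ ‖μ‖)

/-- Condition (R1). -/
def CondR1 (f : ℝ → Hist τ n → EuclideanSpace ℝ (Fin m) → EuclideanSpace ℝ (Fin n)) : Prop :=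
  ∃ γ N, CondR1With f γ N

/-- Condition (R2): continuity in the input at the zero input, uniformly in time and on
bounded sets of histories. -/
def CondR2 (f : ℝ → Hist τ n → EuclideanSpace ℝ (Fin m) → EuclideanSpace ℝ (Fin n)) : Prop :=
  ∀ r > (0:ℝ), ∀ ε > (0:ℝ), ∃ δ > (0:ℝ),
    ∀ t ≥ (0:ℝ), ∀ ψ : Hist τ n, ∀ μ, ‖ψ‖ ≤ r → ‖μ‖ ≤ δ →
      ‖f t ψ μ - f t ψ 0‖ < ε

/-- `L` is a Lipschitz constant for `f(t, ·, 0)` on the ball of radius `r`, uniformly in `t`. -/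
def CondR3With (f : ℝ → Hist τ n → EuclideanSpace ℝ (Fin m) → EuclideanSpace ℝ (Fin n))
    (r L : ℝ) : Prop :=
  ∀ t ≥ (0:ℝ), ∀ ψ φ : Hist τ n, ‖ψ‖ ≤ r → ‖φ‖ ≤ r →
    ‖f t ψ 0 - f t φ 0‖ ≤ L * ‖ψ - φ‖

/-- Condition (R3): `f(t, ψ, 0)` is Lipschitz in `ψ` on bounded sets, uniformly in `t`. -/
def CondR3 (f : ℝ → Hist τ n → EuclideanSpace ℝ (Fin m) → EuclideanSpace ℝ (Fin n)) : Prop :=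
  ∀ r > (0:ℝ), ∃ L, 0 ≤ L ∧ CondR3With f r L

/-- Admissible inputs: locally bounded Lebesgue measurable functions. -/
def AdmInput (u : ℝ → EuclideanSpace ℝ (Fin m)) : Prop :=
  Measurable u ∧ ∀ a b : ℝ, ∃ C : ℝ, ∀ t ∈ Icc a b, ‖u t‖ ≤ C

/-- `x` is a solution of the retarded functional differential equation
`ẋ(t) = f(t, x_t, u(t))` on the interval `[t0, T]` (in integral form). -/
def IsSolOn (τ : ℝ) (f : ℝ → Hist τ n → EuclideanSpace ℝ (Fin m) → EuclideanSpace ℝ (Fin n))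
    (u : ℝ → EuclideanSpace ℝ (Fin m)) (t0 T : ℝ)
    (x : C(ℝ, EuclideanSpace ℝ (Fin n))) : Prop :=
  ∀ t ∈ Icc t0 T, x t = x t0 + ∫ s in t0..t, f s (seg τ x s) (u s)

end

/-- The claim in the proof of Lemma 4.7: under (R1) (with gain `γ`) and (R2), the deviation
`|f(t,ψ,μ) - f(t,ψ,0)|` is bounded by `η + k·γ(|μ|)` on each ball of histories. -/
theorem deviation_bound (τ : ℝ) (hτ : 0 ≤ τ) (n m : ℕ)
    (f : ℝ → Hist τ n → EuclideanSpace ℝ (Fin m) → EuclideanSpace ℝ (Fin n))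
    (γ N : ℝ → ℝ) (hR1 : CondR1With f γ N) (hR2 : CondR2 f) :
    ∀ r > (0:ℝ), ∀ η > (0:ℝ), ∃ k > (0:ℝ),
      ∀ t ≥ (0:ℝ), ∀ ψ : Hist τ n, ∀ μ : EuclideanSpace ℝ (Fin m), ‖ψ‖ ≤ r →
        ‖f t ψ μ - f t ψ 0‖ ≤ η + k * γ ‖μ‖ := by
  obtain ⟨⟨⟨hγc, hγm, hγ0⟩, hγtop⟩, hNmono, hNpos, hbound⟩ := hR1
  intro r hr η hη
  obtain ⟨δ, hδ, hδf⟩ := hR2 r hr η hη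
  have hγδ : 0 < γ δ := by
    have := hγm (le_refl (0:ℝ)) (le_of_lt hδ) hδ
    rwa [hγ0] at this
  have hNr : 0 < N r := hNpos r hr.le
  refine ⟨N r * (2 / γ δ + 1), by positivity, ?_⟩
  intro t ht ψ μ hψ
  have hγμ : 0 ≤ γ ‖μ‖ := by
    rcases eq_or_lt_of_le (norm_nonneg μ) with h | h
    · rw [← h, hγ0]
    · have := hγm (le_refl (0:ℝ)) (norm_nonneg μ) h
      rw [hγ0] at this; exact this.le
  rcases le_or_gt ‖μ‖ δ with hc | hc
  · have := hδf t ht ψ μ hψ hc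
    nlinarith [mul_nonneg (mul_nonneg hNr.le (by positivity : (0:ℝ) ≤ 2 / γ δ + 1)) hγμ]
  · have hγδμ : γ δ ≤ γ ‖μ‖ :=
      (hγm.monotoneOn (le_of_lt hδ) ((le_of_lt hδ).trans hc.le) hc.le)
    have h1 : ‖f t ψ μ - f t ψ 0‖ ≤ ‖f t ψ μ‖ + ‖f t ψ 0‖ := norm_sub_le _ _
    have h2 : ‖f t ψ μ‖ ≤ N ‖ψ‖ * (1 + γ ‖μ‖) := hbound t ht ψ μ
    have h3 : ‖f t ψ 0‖ ≤ N ‖ψ‖ * (1 + γ ‖(0 : EuclideanSpace ℝ (Fin m))‖) :=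
      hbound t ht ψ 0
    rw [norm_zero, hγ0] at h3
    have hNψ : N ‖ψ‖ ≤ N r := hNmono (norm_nonneg ψ) hr.le hψ
    have h2' : 2 ≤ (2 / γ δ) * γ ‖μ‖ := by
      rw [div_mul_eq_mul_div, le_div_iff₀ hγδ]
      nlinarith
    nlinarith [hNpos ‖ψ‖ (norm_nonneg ψ)]
end

section
/- Consider the semilinear evolution equation ẋ(t)=Ax(t)+f(t,x(t),u(t)) on a Banach space X, where A generates a C0-semigroup T(·) with ‖T(t)‖ ≤ Me^{wt} (M≥1, w≥0) and f satisfies conditions (SL1), (SL2), (SL3) and (SL4); let γ∈K∞ be from (SL3). Then for every r>0 and η>0 there exist L=L(r)≥0 (the Lipschitz constant from (SL2)) and k=k(r,η)>0 such that: if x(·) and z(·) are mild solutions with the same initial time t0≥0 and initial datum x0∈X, corresponding respectively to a piecewise continuous input u and to the zero input, and if for some t*>t0 one has ‖x(t)‖ ≤ r and ‖z(t)‖ ≤ r for all t∈[t0,t*], then for all t∈[t0,t*]: ‖x(t)−z(t)‖ ≤ [η(t−t0)+k∫_{t0}^{t} γ(‖u(s)‖)ds] · M e^{w(t−t0)} ·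 e^{LM e^{w(t−t0)} (t−t0)}. -/
open Set Filter MeasureTheory

/-- A strongly continuous semigroup of bounded linear operators on `X`. -/
structure C0Semigroup (X : Type*) [NormedAddCommGroup X] [NormedSpace ℝ X] where
  T : ℝ → X →L[ℝ] X
  map_zero : T 0 = ContinuousLinearMap.id ℝ X
  map_add : ∀ s t : ℝ, 0 ≤ s → 0 ≤ t → T (s + t) = (T s).comp (T t)
  strong_cont : ∀ x : X, ContinuousOn (fun t => T t x) (Ici 0)

variable {X Uv : Type*} [NormedAddCommGroup X] [NormedSpace ℝ X] [CompleteSpace X]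
  [NormedAddCommGroup Uv] [NormedSpace ℝ Uv]

/-- A piecewise continuous function `u : [0,∞) → Uv`. -/
def PWCont (u : ℝ → Uv) : Prop :=
  ∃ σ : ℕ → ℝ, σ 0 = 0 ∧ StrictMono σ ∧ Tendsto σ atTop atTop ∧
    ∀ k : ℕ, ∃ v : ℝ → Uv, ContinuousOn v (Icc (σ k) (σ (k + 1))) ∧
      ∀ t ∈ Ico (σ k) (σ (k + 1)), u t = v t

/-- Condition (SL1): `f` is piecewise continuous in `t` and continuous in its other
variables. -/
def CondSL1 (f : ℝ → X → Uv → X) : Prop :=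
  ∃ σ : ℕ → ℝ, σ 0 = 0 ∧ StrictMono σ ∧ Tendsto σ atTop atTop ∧
    ∀ k : ℕ, ∃ g : ℝ → X → Uv → X,
      ContinuousOn (fun p : ℝ × X × Uv => g p.1 p.2.1 p.2.2)
        {p : ℝ × X × Uv | p.1 ∈ Icc (σ k) (σ (k + 1))} ∧
      ∀ t ∈ Ico (σ k) (σ (k + 1)), ∀ (ξ : X) (μ : Uv), f t ξ μ = g t ξ μ

/-- `L` is a Lipschitz constant for `f(t, ·, μ)` on the ball of radius `r`, uniformly in
`t ≥ 0` and in `‖μ‖ ≤ r`. -/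
def CondSL2With (f : ℝ → X → Uv → X) (r L : ℝ) : Prop :=
  ∀ t ≥ (0:ℝ), ∀ (ξ ω : X) (μ : Uv), ‖ξ‖ ≤ r → ‖ω‖ ≤ r → ‖μ‖ ≤ r →
    ‖f t ξ μ - f t ω μ‖ ≤ L * ‖ξ - ω‖

/-- Condition (SL2): `f(t,ξ,μ)` is Lipschitz in `ξ` on bounded sets, uniformly in `t` and
for `μ` in bounded sets. -/
def CondSL2 (f : ℝ → X → Uv → X) : Prop :=
  ∀ r > (0:ℝ), ∃ L, 0 ≤ L ∧ CondSL2With f r L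

/-- Condition (SL3), with the bound witnessed by `γ ∈ K∞` and a nondecreasing
`N : [0,∞) → (0,∞)`. -/
def CondSL3With (f : ℝ → X → Uv → X) (γ N : ℝ → ℝ) : Prop :=
  ClassKInf γ ∧ MonotoneOn N (Ici 0) ∧ (∀ r ≥ (0:ℝ), 0 < N r) ∧
    ∀ t ≥ (0:ℝ), ∀ (ξ : X) (μ : Uv), ‖f t ξ μ‖ ≤ N ‖ξ‖ * (1 + γ ‖μ‖)

/-- Condition (SL3). -/
def CondSL3 (f : ℝ → X → Uv → X) : Prop := ∃ γ N, CondSL3With f γ N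

/-- Condition (SL4): continuity in the input at the zero input, uniformly in time and on
bounded sets of states. -/
def CondSL4 (f : ℝ → X → Uv → X) : Prop :=
  ∀ r > (0:ℝ), ∀ ε > (0:ℝ), ∃ δ > (0:ℝ),
    ∀ t ≥ (0:ℝ), ∀ (ξ : X) (μ : Uv), ‖ξ‖ ≤ r → ‖μ‖ ≤ δ →
      ‖f t ξ μ - f t ξ 0‖ < ε

/-- `x` is a mild (weak) solution of `ẋ = Ax + f(t,x,u(t))` on the interval `[t0, T]`. -/
def IsMild (Tg : C0Semigroup X) (f : ℝ → X → Uv → X) (u : ℝ → Uv)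
    (t0 T : ℝ) (x : ℝ → X) : Prop :=
  ContinuousOn x (Icc t0 T) ∧
    ∀ t ∈ Icc t0 T,
      x t = Tg.T (t - t0) (x t0) + ∫ s in t0..t, Tg.T (t - s) (f s (x s) (u s))

/-!
Subtracting the two variation-of-constants formulas, the deviation `x - z` is the semigroup
convolution of `f(τ, x, u) - f(τ, z, 0)`. On the ball of radius `r` this difference is at most
`L ‖x - z‖ + η + k γ(‖u‖)`: for small inputs by (SL2) and (SL4), for inputs above the threshold
`δ` of (SL4) by (SL3), since then `γ(‖u‖) / γ(δ) ≥ 1` absorbs the constant. Bounding the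
semigroup by `M e^{w(t - t0)}` on `[0, t - t0]` gives a linear integral inequality, and
Grönwall's inequality closes it. Measurability of the convolution integrands comes from
continuity off the countably many switching times of `f` and `u`.
-/

open Topology

theorem le_mul_exp_of_le_add_mul_integral_s18 {φ : ℝ → ℝ} {a b B K : ℝ} (hab : a ≤ b)
    (hK : 0 ≤ K) (hφ : ContinuousOn φ (Icc a b))
    (h : ∀ s ∈ Icc a b, φ s ≤ B + K * ∫ τ in a..s, φ τ) :
    φ b ≤ B * Real.exp (K * (b - a)) := by
  set G : ℝ → ℝ := fun s => ∫ τ in a..s, φ τ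
  have hG_cont : ContinuousOn G (Icc a b) := by
    simpa [uIcc_of_le hab] using
      intervalIntegral.continuousOn_primitive_interval (hφ.integrableOn_Icc (μ := volume)
        |>.mono_set (uIcc_of_le hab).subset)
  have hG_deriv : ∀ s ∈ Ico a b, HasDerivWithinAt G (φ s) (Ici s) s := fun s hs => by
    have hmem : Icc a b ∈ 𝓝[>] s :=
      mem_of_superset (Icc_mem_nhdsGT hs.2) (Icc_subset_Icc_left hs.1)
    exact intervalIntegral.integral_hasDerivWithinAt_right (t := Ioi s)
      ((hφ.mono (Icc_subset_Icc_right hs.2.le)).intervalIntegrable_of_Icc hs.1)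
      ((hφ.stronglyMeasurableAtFilter_nhdsWithin measurableSet_Icc s).filter_mono
        (nhdsWithin_le_of_mem hmem))
      ((hφ s (Ico_subset_Icc_self hs)).mono_of_mem_nhdsWithin hmem)
  have hG_le : G b ≤ gronwallBound 0 K B (b - a) :=
    le_gronwallBound_of_liminf_deriv_right_le hG_cont
      (fun s hs _ hr => (hG_deriv s hs).liminf_right_slope_le hr) (by simp [G])
      (fun s hs => by linarith [h s (Ico_subset_Icc_self hs)]) b (right_mem_Icc.2 hab)
  calc φ b ≤ B + K * G b := h b (right_mem_Icc.2 hab)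
    _ ≤ B + K * gronwallBound 0 K B (b - a) := by gcongr
    _ = B * Real.exp (K * (b - a)) := by
      rcases hK.eq_or_lt with rfl | hKpos
      · simp
      · rw [gronwallBound_of_K_ne_0 hKpos.ne']
        field_simp
        ring

theorem aestronglyMeasurable_restrict_of_continuousOn_diff {α β : Type*} [TopologicalSpace α]
    [MeasurableSpace α] [OpensMeasurableSpace α] [MeasurableSingletonClass α]
    [TopologicalSpace β] [TopologicalSpace.PseudoMetrizableSpace β]
    [SecondCountableTopologyEither α β] {μ : Measure α} [NullSingletonClass μ] {g : α → β}
    {s D : Set α}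
    (hs : MeasurableSet s) (hD : D.Countable) (hg : ContinuousOn g (s \ D)) :
    AEStronglyMeasurable g (μ.restrict s) := by
  rw [← Measure.restrict_congr_set (sdiff_null_ae_eq_self (hD.measure_zero μ))]
  exact hg.aestronglyMeasurable (hs.diff hD.measurableSet)

theorem exists_mem_Ioo_of_notMem_range {σ : ℕ → ℝ} (h0 : σ 0 = 0)
    (hσ : Tendsto σ atTop atTop) {t : ℝ} (ht : 0 ≤ t) (htσ : t ∉ range σ) :
    ∃ k, t ∈ Ioo (σ k) (σ (k + 1)) := by
  classical
  have hex : ∃ n, t < σ n := (hσ.eventually_gt_atTop t).exists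
  obtain ⟨k, hk⟩ : ∃ k, Nat.find hex = k + 1 := Nat.exists_eq_succ_of_ne_zero fun h => by
    have := Nat.find_spec hex
    rw [h, h0] at this
    linarith
  refine ⟨k, lt_of_le_of_ne ?_ fun h => htσ ⟨k, h⟩, hk ▸ Nat.find_spec hex⟩
  exact not_lt.1 (Nat.find_min hex (by omega))

section PiecewiseContinuous

variable {E : Type*} [NormedAddCommGroup E]

theorem PWCont.const (c : E) : PWCont fun _ : ℝ => c :=
  ⟨fun n => n, Nat.cast_zero, Nat.strictMono_cast, tendsto_natCast_atTop_atTop,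
    fun _ => ⟨fun _ => c, continuousOn_const, fun _ _ => rfl⟩⟩

theorem PWCont.comp_norm {u : ℝ → E} (hu : PWCont u) {γ : ℝ → ℝ}
    (hγ : ContinuousOn γ (Ici 0)) : PWCont fun t => γ ‖u t‖ := by
  obtain ⟨σ, h0, hσ, hσ_top, hpc⟩ := hu
  refine ⟨σ, h0, hσ, hσ_top, fun k => ?_⟩
  obtain ⟨v, hv, huv⟩ := hpc k
  exact ⟨fun t => γ ‖v t‖, hγ.comp hv.norm fun _ _ => norm_nonneg _,
    fun t ht => congrArg (fun e => γ ‖e‖) (huv t ht)⟩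

theorem PWCont.intervalIntegrable {g : ℝ → E} (hg : PWCont g) {a b : ℝ} (ha : 0 ≤ a)
    (hb : 0 ≤ b) : IntervalIntegrable g volume a b := by
  obtain ⟨σ, h0, hσ, hσ_top, hpc⟩ := hg
  have hpiece : ∀ n, IntervalIntegrable g volume (σ n) (σ (n + 1)) := fun n => by
    obtain ⟨v, hv, hgv⟩ := hpc n
    rw [intervalIntegrable_iff_integrableOn_Ico_of_le (hσ (Nat.lt_succ_self n)).le]
    exact (hv.integrableOn_Icc.mono_set Ico_subset_Icc_self).congr_fun
      (fun t ht => (hgv t ht).symm) measurableSet_Ico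
  have hinit : ∀ n, IntervalIntegrable g volume 0 (σ n) := fun n => by
    induction n with
    | zero => rw [h0]
    | succ n ih => exact ih.trans (hpiece n)
  obtain ⟨n, hn⟩ := (hσ_top.eventually_ge_atTop (max a b)).exists
  have hmem : ∀ c, 0 ≤ c → c ≤ max a b → c ∈ uIcc 0 (σ n) := fun c hc hcn => by
    rw [uIcc_of_le (hc.trans (hcn.trans hn))]
    exact ⟨hc, hcn.trans hn⟩
  exact (hinit n).mono_set
    (uIcc_subset_uIcc (hmem a ha (le_max_left a b)) (hmem b hb (le_max_right a b)))

theorem PWCont.exists_countable_continuousAt {u : ℝ → E} (hu : PWCont u) :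
    ∃ D : Set ℝ, D.Countable ∧ ∀ t ∈ Ici 0 \ D, ContinuousAt u t := by
  obtain ⟨σ, h0, -, hσ_top, hpc⟩ := hu
  refine ⟨range σ, countable_range σ, fun t ⟨ht, htσ⟩ => ?_⟩
  obtain ⟨k, hk⟩ := exists_mem_Ioo_of_notMem_range h0 hσ_top ht htσ
  obtain ⟨v, hv, huv⟩ := hpc k
  have hO : Ioo (σ k) (σ (k + 1)) ∈ 𝓝 t := isOpen_Ioo.mem_nhds hk
  exact ((hv.mono Ioo_subset_Icc_self).continuousAt hO).congr
    (eventually_of_mem hO fun s hs => (huv s (Ioo_subset_Ico_self hs)).symm)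

end PiecewiseContinuous

theorem ClassK.pos {α : ℝ → ℝ} (hα : ClassK α) {a : ℝ} (ha : 0 < a) : 0 < α a := by
  simpa [hα.2.2] using hα.2.1 (mem_Ici.2 le_rfl) (mem_Ici.2 ha.le) ha

theorem ClassK.nonneg {α : ℝ → ℝ} (hα : ClassK α) {a : ℝ} (ha : 0 ≤ a) : 0 ≤ α a :=
  ha.eq_or_lt.elim (fun h => h ▸ hα.2.2.ge) fun h => (hα.pos h).le

section Conditions

variable {E U : Type*} [NormedAddCommGroup E] [NormedAddCommGroup U] {f : ℝ → E → U → E}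

theorem CondSL1.exists_countable_continuousAt (hf : CondSL1 f) :
    ∃ D : Set ℝ, D.Countable ∧ ∀ t ∈ Ici 0 \ D, ∀ (ξ : E) (μ : U),
      ContinuousAt (fun p : ℝ × E × U => f p.1 p.2.1 p.2.2) (t, ξ, μ) := by
  obtain ⟨σ, h0, -, hσ_top, hpc⟩ := hf
  refine ⟨range σ, countable_range σ, fun t ⟨ht, htσ⟩ ξ μ => ?_⟩
  obtain ⟨k, hk⟩ := exists_mem_Ioo_of_notMem_range h0 hσ_top ht htσ
  obtain ⟨g, hg, hfg⟩ := hpc k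
  have hO : {p : ℝ × E × U | p.1 ∈ Ioo (σ k) (σ (k + 1))} ∈ 𝓝 (t, ξ, μ) :=
    (isOpen_Ioo.preimage continuous_fst).mem_nhds hk
  exact ((hg.mono fun p hp => Ioo_subset_Icc_self hp).continuousAt hO).congr
    (eventually_of_mem hO fun p hp => (hfg p.1 (Ioo_subset_Ico_self hp) _ _).symm)

theorem CondSL3With.norm_le {γ N : ℝ → ℝ} (h : CondSL3With f γ N) {t r : ℝ} (ht : 0 ≤ t)
    {ξ : E} (hξ : ‖ξ‖ ≤ r) (μ : U) : ‖f t ξ μ‖ ≤ N r * (1 + γ ‖μ‖) :=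
  (h.2.2.2 t ht ξ μ).trans <| mul_le_mul_of_nonneg_right
    (h.2.1 (norm_nonneg ξ) ((norm_nonneg ξ).trans hξ) hξ)
    (by linarith [h.1.1.nonneg (norm_nonneg μ)])

theorem exists_norm_sub_le_add_mul_gamma {γ N : ℝ → ℝ} {r L η : ℝ} (hL0 : 0 ≤ L)
    (hL : CondSL2With f r L) (hSL3 : CondSL3With f γ N) (hSL4 : CondSL4 f) (hr : 0 < r)
    (hη : 0 < η) :
    ∃ k > 0, ∀ t ≥ (0 : ℝ), ∀ (ξ ω : E) (μ : U), ‖ξ‖ ≤ r → ‖ω‖ ≤ r →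
      ‖f t ξ μ - f t ω 0‖ ≤ L * ‖ξ - ω‖ + η + k * γ ‖μ‖ := by
  obtain ⟨δ₀, hδ₀, hsmall⟩ := hSL4 r hr η hη
  set δ := min δ₀ r
  have hγδ : 0 < γ δ := hSL3.1.1.pos (lt_min hδ₀ hr)
  have hNr : 0 < N r := hSL3.2.2.1 r hr.le
  refine ⟨N r * (2 / γ δ + 1), by positivity, fun t ht ξ ω μ hξ hω => ?_⟩
  have hγμ : 0 ≤ γ ‖μ‖ := hSL3.1.1.nonneg (norm_nonneg μ)
  have hLξω : 0 ≤ L * ‖ξ - ω‖ := by positivity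
  rcases le_or_gt ‖μ‖ δ with hμ | hμ
  · have hlip := hL t ht ξ ω μ hξ hω (hμ.trans (min_le_right _ _))
    have hcont := hsmall t ht ω μ hω (hμ.trans (min_le_left _ _))
    calc ‖f t ξ μ - f t ω 0‖ ≤ ‖f t ξ μ - f t ω μ‖ + ‖f t ω μ - f t ω 0‖ :=
          norm_sub_le_norm_sub_add_norm_sub _ _ _
      _ ≤ L * ‖ξ - ω‖ + η + N r * (2 / γ δ + 1) * γ ‖μ‖ := by
          have : 0 ≤ N r * (2 / γ δ + 1) * γ ‖μ‖ := by positivity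
          linarith
  · have hγ_le : γ δ ≤ γ ‖μ‖ :=
      (hSL3.1.1.2.1 (mem_Ici.2 (lt_min hδ₀ hr).le) (mem_Ici.2 (norm_nonneg μ)) hμ).le
    have hω0 := hSL3.norm_le ht hω (0 : U)
    rw [norm_zero, hSL3.1.1.2.2] at hω0
    have hthreshold : 2 * N r ≤ N r * (2 / γ δ) * γ ‖μ‖ :=
      calc 2 * N r = N r * (2 / γ δ) * γ δ := by field_simp
        _ ≤ N r * (2 / γ δ) * γ ‖μ‖ := by gcongr
    calc ‖f t ξ μ - f t ω 0‖ ≤ ‖f t ξ μ‖ + ‖f t ω 0‖ := norm_sub_le _ _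
      _ ≤ N r * (1 + γ ‖μ‖) + N r * (1 + 0) := add_le_add (hSL3.norm_le ht hξ μ) hω0
      _ ≤ L * ‖ξ - ω‖ + η + N r * (2 / γ δ + 1) * γ ‖μ‖ := by nlinarith

end Conditions

section Semigroup

variable {E : Type*} [NormedAddCommGroup E] [NormedSpace ℝ E] {Tg : C0Semigroup E} {M w : ℝ}

theorem C0Semigroup.norm_le_of_mem_Icc (hT : ∀ t ≥ (0 : ℝ), ‖Tg.T t‖ ≤ M * Real.exp (w * t))
    (hw : 0 ≤ w) {t R : ℝ} (ht : t ∈ Icc 0 R) : ‖Tg.T t‖ ≤ M * Real.exp (w * R) := by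
  have hM : 0 ≤ M := (norm_nonneg _).trans (by simpa using hT 0 le_rfl)
  exact (hT t ht.1).trans (by gcongr; exact ht.2)

theorem C0Semigroup.continuousOn_apply (hT : ∀ t ≥ (0 : ℝ), ‖Tg.T t‖ ≤ M * Real.exp (w * t))
    {α : Type*} [TopologicalSpace α] {A : Set α} {g : α → ℝ} {c : α → E}
    (hg : ContinuousOn g A) (hgA : MapsTo g A (Ici 0)) (hc : ContinuousOn c A) :
    ContinuousOn (fun a => Tg.T (g a) (c a)) A := by
  intro a₀ ha₀
  have hfixed : ContinuousWithinAt (fun a => Tg.T (g a) (c a₀)) A a₀ :=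
    (Tg.strong_cont (c a₀) (g a₀) (hgA ha₀)).comp (hg a₀ ha₀) hgA
  have hdev : Tendsto (fun a => Tg.T (g a) (c a - c a₀)) (𝓝[A] a₀) (𝓝 0) := by
    have hbound : Tendsto (fun a => M * Real.exp (w * g a) * ‖c a - c a₀‖) (𝓝[A] a₀)
        (𝓝 (M * Real.exp (w * g a₀) * 0)) :=
      (tendsto_const_nhds.mul ((hg a₀ ha₀).const_mul w).rexp).mul
        (tendsto_iff_norm_sub_tendsto_zero.1 (hc a₀ ha₀))
    refine squeeze_zero_norm' ?_ (by simpa using hbound)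
    filter_upwards [self_mem_nhdsWithin] with a ha
    exact (Tg.T (g a)).le_of_opNorm_le (hT _ (hgA ha)) _
  simpa [ContinuousWithinAt] using hdev.add hfixed

variable {U : Type*} [NormedAddCommGroup U] {f : ℝ → E → U → E}

theorem C0Semigroup.intervalIntegrable_apply_forcing
    (hT : ∀ t ≥ (0 : ℝ), ‖Tg.T t‖ ≤ M * Real.exp (w * t)) (hw : 0 ≤ w) (hSL1 : CondSL1 f)
    {γ N : ℝ → ℝ} (hSL3 : CondSL3With f γ N) {u : ℝ → U} (hu : PWCont u) {y : ℝ → E}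
    {t0 s r : ℝ} (ht0 : 0 ≤ t0) (hs : t0 ≤ s) (hy : ContinuousOn y (Icc t0 s))
    (hyr : ∀ τ ∈ Icc t0 s, ‖y τ‖ ≤ r) :
    IntervalIntegrable (fun τ => Tg.T (s - τ) (f τ (y τ) (u τ))) volume t0 s := by
  obtain ⟨D₁, hD₁, hf_cont⟩ := hSL1.exists_countable_continuousAt
  obtain ⟨D₂, hD₂, hu_cont⟩ := hu.exists_countable_continuousAt
  have hforcing : ContinuousOn (fun τ => f τ (y τ) (u τ)) (Icc t0 s \ (D₁ ∪ D₂)) := by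
    intro τ ⟨hτ, hτD⟩
    have hτ0 : τ ∈ Ici (0 : ℝ) := ht0.trans hτ.1
    have hcurve : ContinuousWithinAt (fun τ => (τ, y τ, u τ)) (Icc t0 s \ (D₁ ∪ D₂)) τ :=
      continuousWithinAt_id.prodMk (((hy τ hτ).mono sdiff_subset).prodMk
        (hu_cont τ ⟨hτ0, fun h => hτD (Or.inr h)⟩).continuousWithinAt)
    exact ContinuousAt.comp_continuousWithinAt (f := fun τ => (τ, y τ, u τ))
      (hf_cont τ ⟨hτ0, fun h => hτD (Or.inl h)⟩ _ _) hcurve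
  have hmeas : AEStronglyMeasurable (fun τ => Tg.T (s - τ) (f τ (y τ) (u τ)))
      (volume.restrict (Icc t0 s)) :=
    aestronglyMeasurable_restrict_of_continuousOn_diff measurableSet_Icc (hD₁.union hD₂)
      (Tg.continuousOn_apply hT (continuousOn_const.sub continuousOn_id)
        (fun τ hτ => sub_nonneg.2 hτ.1.2) hforcing)
  have hdom : IntervalIntegrable (fun τ => M * Real.exp (w * (s - t0)) * (N r * (1 + γ ‖u τ‖)))
      volume t0 s :=
    ((intervalIntegrable_const.add ((hu.comp_norm hSL3.1.1.1).intervalIntegrable ht0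
      (ht0.trans hs))).const_mul _).const_mul _
  rw [intervalIntegrable_iff_integrableOn_Icc_of_le hs] at hdom ⊢
  refine hdom.mono' hmeas (ae_restrict_of_forall_mem measurableSet_Icc fun τ hτ => ?_)
  exact (Tg.T _).le_of_opNorm_le_of_le
    (Tg.norm_le_of_mem_Icc hT hw ⟨sub_nonneg.2 hτ.2, by linarith [hτ.1]⟩)
    (hSL3.norm_le (ht0.trans hτ.1) (hyr τ hτ) _)

end Semigroup

section MildSolutions

variable {E U : Type*} [NormedAddCommGroup E] [NormedSpace ℝ E]
  {Tg : C0Semigroup E} {f : ℝ → E → U → E} {u v : ℝ → U} {t0 t1 : ℝ} {x z : ℝ → E}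

theorem IsMild.mono (hx : IsMild Tg f u t0 t1 x) {t2 : ℝ} (ht : t2 ≤ t1) :
    IsMild Tg f u t0 t2 x :=
  ⟨hx.1.mono (Icc_subset_Icc_right ht), fun s hs => hx.2 s (Icc_subset_Icc_right ht hs)⟩

variable [NormedAddCommGroup U] {M w : ℝ} {γ N : ℝ → ℝ} {r : ℝ}

theorem IsMild.sub_eq_integral (hT : ∀ t ≥ (0 : ℝ), ‖Tg.T t‖ ≤ M * Real.exp (w * t))
    (hw : 0 ≤ w) (hSL1 : CondSL1 f) (hSL3 : CondSL3With f γ N) (hu : PWCont u)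
    (hv : PWCont v) (ht0 : 0 ≤ t0) (h : t0 ≤ t1) (hx : IsMild Tg f u t0 t1 x)
    (hz : IsMild Tg f v t0 t1 z) (hxz : x t0 = z t0) (hxr : ∀ τ ∈ Icc t0 t1, ‖x τ‖ ≤ r)
    (hzr : ∀ τ ∈ Icc t0 t1, ‖z τ‖ ≤ r) :
    x t1 - z t1 = ∫ τ in t0..t1, Tg.T (t1 - τ) (f τ (x τ) (u τ) - f τ (z τ) (v τ)) := by
  rw [hx.2 t1 (right_mem_Icc.2 h), hz.2 t1 (right_mem_Icc.2 h), hxz, add_sub_add_left_eq_sub,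
    ← intervalIntegral.integral_sub
      (Tg.intervalIntegrable_apply_forcing hT hw hSL1 hSL3 hu ht0 h hx.1 hxr)
      (Tg.intervalIntegrable_apply_forcing hT hw hSL1 hSL3 hv ht0 h hz.1 hzr)]
  simp only [map_sub]

theorem IsMild.norm_sub_le_mul_exp (hT : ∀ t ≥ (0 : ℝ), ‖Tg.T t‖ ≤ M * Real.exp (w * t))
    (hw : 0 ≤ w) (hSL1 : CondSL1 f) (hSL3 : CondSL3With f γ N) (hu : PWCont u)
    (hv : PWCont v) (ht0 : 0 ≤ t0) (h : t0 ≤ t1) (hx : IsMild Tg f u t0 t1 x)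
    (hz : IsMild Tg f v t0 t1 z) (hxz : x t0 = z t0) (hxr : ∀ τ ∈ Icc t0 t1, ‖x τ‖ ≤ r)
    (hzr : ∀ τ ∈ Icc t0 t1, ‖z τ‖ ≤ r) {L : ℝ} (hL0 : 0 ≤ L) {ρ : ℝ → ℝ}
    (hρ : IntervalIntegrable ρ volume t0 t1) (hρ0 : ∀ τ ∈ Icc t0 t1, 0 ≤ ρ τ)
    (hfρ : ∀ τ ∈ Icc t0 t1,
      ‖f τ (x τ) (u τ) - f τ (z τ) (v τ)‖ ≤ L * ‖x τ - z τ‖ + ρ τ) :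
    ‖x t1 - z t1‖ ≤ M * Real.exp (w * (t1 - t0)) * (∫ τ in t0..t1, ρ τ) *
      Real.exp (M * Real.exp (w * (t1 - t0)) * L * (t1 - t0)) := by
  set K := M * Real.exp (w * (t1 - t0))
  have hK : 0 ≤ K := (norm_nonneg _).trans (Tg.norm_le_of_mem_Icc hT hw ⟨le_rfl, sub_nonneg.2 h⟩)
  have hdist_cont : ContinuousOn (fun τ => ‖x τ - z τ‖) (Icc t0 t1) := (hx.1.sub hz.1).norm
  refine le_mul_exp_of_le_add_mul_integral_s18 h (mul_nonneg hK hL0) hdist_cont fun s hs => ?_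
  have hsub : Icc t0 s ⊆ Icc t0 t1 := Icc_subset_Icc_right hs.2
  have hρs : IntervalIntegrable ρ volume t0 s := hρ.mono_set (uIcc_subset_uIcc_left
    (by simpa [uIcc_of_le h] using hs))
  have hdist_int : IntervalIntegrable (fun τ => ‖x τ - z τ‖) volume t0 s :=
    (hdist_cont.mono hsub).intervalIntegrable_of_Icc hs.1
  rw [(hx.mono hs.2).sub_eq_integral hT hw hSL1 hSL3 hu hv ht0 hs.1 (hz.mono hs.2) hxz
    (fun τ hτ => hxr τ (hsub hτ)) (fun τ hτ => hzr τ (hsub hτ))]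
  calc ‖∫ τ in t0..s, Tg.T (s - τ) (f τ (x τ) (u τ) - f τ (z τ) (v τ))‖
      ≤ ∫ τ in t0..s, K * (L * ‖x τ - z τ‖ + ρ τ) :=
        intervalIntegral.norm_integral_le_of_norm_le hs.1
          (ae_of_all _ fun τ hτ => (Tg.T _).le_of_opNorm_le_of_le
            (Tg.norm_le_of_mem_Icc hT hw ⟨sub_nonneg.2 hτ.2, by linarith [hτ.1, hs.2]⟩)
            (hfρ τ (hsub (Ioc_subset_Icc_self hτ))))
          (((hdist_int.const_mul L).add hρs).const_mul K)
    _ = K * (∫ τ in t0..s, ρ τ) + K * L * ∫ τ in t0..s, ‖x τ - z τ‖ := by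
        rw [intervalIntegral.integral_const_mul, intervalIntegral.integral_add
          (hdist_int.const_mul L) hρs, intervalIntegral.integral_const_mul]
        ring
    _ ≤ K * (∫ τ in t0..t1, ρ τ) + K * L * ∫ τ in t0..s, ‖x τ - z τ‖ := by
        gcongr
        exact intervalIntegral.integral_mono_interval le_rfl hs.1 hs.2
          (ae_restrict_of_forall_mem measurableSet_Ioc fun τ hτ => hρ0 τ (Ioc_subset_Icc_self hτ))
          hρ

end MildSolutions

theorem mild_solution_deviation_bound_general (Tg : C0Semigroup X) (f : ℝ → X → Uv → X)
    (M w : ℝ) (hw : 0 ≤ w)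
    (hT : ∀ t ≥ (0:ℝ), ‖Tg.T t‖ ≤ M * Real.exp (w * t))
    (hSL1 : CondSL1 f) (hSL2 : CondSL2 f)
    (γ N : ℝ → ℝ) (hSL3 : CondSL3With f γ N) (hSL4 : CondSL4 f) :
    ∀ r > (0:ℝ), ∀ η > (0:ℝ), ∃ L k : ℝ, 0 ≤ L ∧ 0 < k ∧ CondSL2With f r L ∧
      ∀ t0 ≥ (0:ℝ), ∀ tstar > t0, ∀ u : ℝ → Uv, PWCont u →
        ∀ x z : ℝ → X,
          IsMild Tg f u t0 tstar x →
          IsMild Tg f (fun _ => 0) t0 tstar z →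
          x t0 = z t0 →
          (∀ t ∈ Icc t0 tstar, ‖x t‖ ≤ r ∧ ‖z t‖ ≤ r) →
          ∀ t ∈ Icc t0 tstar,
            ‖x t - z t‖ ≤
              (η * (t - t0) + k * ∫ s in t0..t, γ ‖u s‖) *
                (M * Real.exp (w * (t - t0))) *
                Real.exp (L * M * Real.exp (w * (t - t0)) * (t - t0)) := by
  intro r hr η hη
  obtain ⟨L, hL0, hL⟩ := hSL2 r hr
  obtain ⟨k, hk, hfk⟩ := exists_norm_sub_le_add_mul_gamma hL0 hL hSL3 hSL4 hr hη
  refine ⟨L, k, hL0, hk, hL, fun t0 ht0 tstar _ u hu x z hx hz hxz hxzr t ht => ?_⟩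
  have hxzr' : ∀ τ ∈ Icc t0 t, ‖x τ‖ ≤ r ∧ ‖z τ‖ ≤ r :=
    fun τ hτ => hxzr τ (Icc_subset_Icc_right ht.2 hτ)
  have hγu : IntervalIntegrable (fun τ => γ ‖u τ‖) volume t0 t :=
    (hu.comp_norm hSL3.1.1.1).intervalIntegrable ht0 (ht0.trans ht.1)
  have hdev := (hx.mono ht.2).norm_sub_le_mul_exp hT hw hSL1 hSL3 hu (PWCont.const 0) ht0 ht.1
    (hz.mono ht.2) hxz (fun τ hτ => (hxzr' τ hτ).1) (fun τ hτ => (hxzr' τ hτ).2) hL0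
    (ρ := fun τ => η + k * γ ‖u τ‖)
    (intervalIntegrable_const.add (hγu.const_mul k))
    (fun τ _ => add_nonneg hη.le (mul_nonneg hk.le (hSL3.1.1.nonneg (norm_nonneg _))))
    (fun τ hτ => (hfk τ (ht0.trans hτ.1) _ _ _ (hxzr' τ hτ).1 (hxzr' τ hτ).2).trans_eq
      (add_assoc _ _ _))
  rw [intervalIntegral.integral_add intervalIntegrable_const (hγu.const_mul k),
    intervalIntegral.integral_const, intervalIntegral.integral_const_mul, smul_eq_mul,
    mul_comm (M * Real.exp (w * (t - t0))) L, ← mul_assoc L M] at hdev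
  exact hdev.trans_eq (by ring)

/-- Lemma F.1: under (SL1)–(SL4) (with `γ` from (SL3)) and the semigroup bound
`‖T(t)‖ ≤ M e^{wt}`, the deviation between the mild solution with input `u` and the
zero-input mild solution with the same initial data admits an explicit Gronwall-type bound,
as long as both solutions remain in a ball of radius `r`. -/
theorem mild_solution_deviation_bound (Tg : C0Semigroup X) (f : ℝ → X → Uv → X)
    (M w : ℝ) (hM : 1 ≤ M) (hw : 0 ≤ w)
    (hT : ∀ t ≥ (0:ℝ), ‖Tg.T t‖ ≤ M * Real.exp (w * t))
    (hSL1 : CondSL1 f) (hSL2 : CondSL2 f)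
    (γ N : ℝ → ℝ) (hSL3 : CondSL3With f γ N) (hSL4 : CondSL4 f) :
    ∀ r > (0:ℝ), ∀ η > (0:ℝ), ∃ L k : ℝ, 0 ≤ L ∧ 0 < k ∧ CondSL2With f r L ∧
      ∀ t0 ≥ (0:ℝ), ∀ tstar > t0, ∀ u : ℝ → Uv, PWCont u →
        ∀ x z : ℝ → X,
          IsMild Tg f u t0 tstar x →
          IsMild Tg f (fun _ => 0) t0 tstar z →
          x t0 = z t0 →
          (∀ t ∈ Icc t0 tstar, ‖x t‖ ≤ r ∧ ‖z t‖ ≤ r) →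
          ∀ t ∈ Icc t0 tstar,
            ‖x t - z t‖ ≤
              (η * (t - t0) + k * ∫ s in t0..t, γ ‖u s‖) *
                (M * Real.exp (w * (t - t0))) *
                Real.exp (L * M * Real.exp (w * (t - t0)) * (t - t0)) :=
  mild_solution_deviation_bound_general Tg f M w hw hT hSL1 hSL2 γ N hSL3 hSL4
end
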